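/- arXiv:2102.06188 — 7 statements merged into one kernel-verified Lean document; each statement's English description precedes it below -/
import Mathlib

section
/- Let n ≥ 2, let D ⊆ {1,…,n−1}, let j ∈ {1,…,n−1}, and set v := Σ_{w ∈ W_D} w·α_j ∈ ℚ^n. Then: (i) 0 ≤ v, i.e. v is a ℚ≥0-linear combination of the simple roots α_1,…,α_{n−1}; (ii) v = 0 if and only if j ∈ D; (iii) if j ∉ D then j ∈ supp(v), and in fact |W_D|·α_j ≤ v. (Paper: Lemma 'sumw' in §2.2, for G = GL_n.) -/
/-!
Setup (§2.2 of the paper, for `G = GL_n`): the symmetric group `S_n` acts on `ℚ^n` by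
permuting coordinates, `(w • v) k = v (w⁻¹ k)`.  Coordinates are indexed by `Fin n`
(`0`-based), so the simple roots are `α i = e i − e (i+1)` for `i ∈ {0, …, n−2}`
(the paper's `α_{i+1}`), subsets of simple roots are subsets of
`{0, …, n−2} = Finset.range (n−1)`, and `θ = (n−1, n−2, …, 1, 0)`.
-/

namespace BHHMS

/-- The standard basis vector `e i` of `ℚ^n`. -/
def stde (n i : ℕ) : Fin n → ℚ := fun k => if (k : ℕ) = i then 1 else 0

/-- The simple root `α i = e i − e (i+1)`, for `i ∈ {0, …, n−2}`. -/
def simpleRoot (n i : ℕ) : Fin n → ℚ := stde n i - stde n (i + 1)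

/-- The action of `S_n` on `ℚ^n` permuting the coordinates: `(w • v) k = v (w⁻¹ k)`. -/
def permAct (n : ℕ) (w : Equiv.Perm (Fin n)) (v : Fin n → ℚ) : Fin n → ℚ :=
  fun k => v (w⁻¹ k)

/-- `v ≤ v'` iff `v' − v` is a `ℚ≥0`-linear combination of the simple roots. -/
def rootLE (n : ℕ) (v v' : Fin n → ℚ) : Prop :=
  ∃ c : ℕ → ℚ, (∀ i, 0 ≤ c i) ∧ v' - v = ∑ i ∈ Finset.range (n - 1), c i • simpleRoot n i

/-- `v` is dominant iff `v 0 ≥ v 1 ≥ … ≥ v (n−1)`. -/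
def Dominant (n : ℕ) (v : Fin n → ℚ) : Prop := ∀ i j : Fin n, i ≤ j → v j ≤ v i

/-- The adjacent transposition `s i = (i, i+1)` (junk value `1` if `i + 1 ≥ n`). -/
def adjSwap (n i : ℕ) : Equiv.Perm (Fin n) :=
  if h : i + 1 < n then Equiv.swap ⟨i, Nat.lt_of_succ_lt h⟩ ⟨i + 1, h⟩ else 1

/-- The subgroup `W_D ⊆ S_n` generated by the `s i` for `i ∈ D`. -/
def WD (n : ℕ) (D : Finset ℕ) : Subgroup (Equiv.Perm (Fin n)) :=
  Subgroup.closure (adjSwap n '' ↑D)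

/-- `Σ_{w ∈ W_D} w·v`. -/
noncomputable def WDsum (n : ℕ) (D : Finset ℕ) (v : Fin n → ℚ) : Fin n → ℚ :=
  ∑ᶠ w ∈ WD n D, permAct n w v

/-- The `W_D`-average `λ'_D = |W_D|⁻¹ Σ_{w ∈ W_D} w·λ`. -/
noncomputable def avg (n : ℕ) (D : Finset ℕ) (v : Fin n → ℚ) : Fin n → ℚ :=
  ((Nat.card ↥(WD n D) : ℚ))⁻¹ • WDsum n D v

/-- For `v` of coordinate sum `0`, writing `v = Σ_i c_i • α_i` one has
`c_i = v 0 + ⋯ + v i`; then `supp v = {i : c_i ≠ 0}`. -/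
def suppOf (n : ℕ) (v : Fin n → ℚ) : Finset ℕ :=
  (Finset.range (n - 1)).filter fun i => (∑ k : Fin n, if (k : ℕ) ≤ i then v k else 0) ≠ 0

/-- `w` is `D`-admissible iff `w (i+1) = w i + 1` for every `i ∈ D`. -/
def IsAdmissible (n : ℕ) (D : Finset ℕ) (w : Equiv.Perm (Fin n)) : Prop :=
  ∀ i ∈ D, ∀ h : i + 1 < n,
    ((w ⟨i + 1, h⟩ : Fin n) : ℕ) = ((w ⟨i, Nat.lt_of_succ_lt h⟩ : Fin n) : ℕ) + 1

/-- The image `w(D) = {w i : i ∈ D}` as a subset of `ℕ`. -/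
def permImage (n : ℕ) (w : Equiv.Perm (Fin n)) (D : Finset ℕ) : Finset ℕ :=
  D.image fun i => if h : i < n then ((w ⟨i, h⟩ : Fin n) : ℕ) else i

/-- `θ = (n−1, n−2, …, 1, 0)`. -/
def theta (n : ℕ) : Fin n → ℚ := fun k => (n : ℚ) - 1 - ((k : ℕ) : ℚ)

/-- A vector of `ℤ^n` seen in `ℚ^n`. -/
def ratVec (n : ℕ) (lam : Fin n → ℤ) : Fin n → ℚ := fun k => ((lam k : ℤ) : ℚ)

/-- `λ ∈ ℤ^n` satisfies `(H_f)` iff `σ·λ ≤ fθ` for every `σ ∈ S_n`. -/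
def SatisfiesHf (n f : ℕ) (lam : Fin n → ℤ) : Prop :=
  ∀ σ : Equiv.Perm (Fin n), rootLE n (permAct n σ (ratVec n lam)) ((f : ℚ) • theta n)

/-!
Writing a coordinate-sum-zero vector as `Σ cᵢ αᵢ`, the coefficient `cᵢ` is the partial sum
`v 0 + ⋯ + v i`, so `≤` is read off partial sums. If `j ∈ D`, then `sⱼ ∈ W_D` and
`sⱼ αⱼ = -αⱼ`, so reindexing the sum by `w ↦ w sⱼ` shows that it equals its own negative.
If `j ∉ D`, every generator of `W_D` preserves `{0, …, j}`, hence so does every `w ∈ W_D`;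
thus `w j ≤ j < w (j+1)`, and the `i`-th partial sum of `w αⱼ = e_{w j} − e_{w (j+1)}`
is at least that of `αⱼ`, namely `δᵢⱼ`. Summing over `W_D` gives `|W_D| αⱼ ≤ v`.
-/

open Finset

def partialSum (n i : ℕ) : (Fin n → ℚ) →ₗ[ℚ] ℚ :=
  ∑ k ∈ univ.filter (fun k : Fin n => (k : ℕ) ≤ i), LinearMap.proj k

section

variable {n : ℕ}

lemma partialSum_apply (i : ℕ) (v : Fin n → ℚ) :
    partialSum n i v = ∑ k ∈ univ.filter (fun k : Fin n => (k : ℕ) ≤ i), v k := by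
  simp [partialSum]

lemma mem_suppOf_iff (v : Fin n → ℚ) (i : ℕ) :
    i ∈ suppOf n v ↔ i < n - 1 ∧ partialSum n i v ≠ 0 := by
  simp [suppOf, partialSum_apply, Finset.sum_filter]

lemma stde_eq_single {m : ℕ} (hm : m < n) : stde n m = Pi.single ⟨m, hm⟩ 1 := by
  ext k
  simp [stde, Pi.single_apply, Fin.ext_iff]

lemma partialSum_stde {m : ℕ} (hm : m < n) (i : ℕ) :
    partialSum n i (stde n m) = if m ≤ i then 1 else 0 := by
  simp [partialSum_apply, stde_eq_single hm, Finset.sum_pi_single']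

lemma permAct_stde (w : Equiv.Perm (Fin n)) {m : ℕ} (hm : m < n) :
    permAct n w (stde n m) = stde n (w ⟨m, hm⟩) := by
  ext k
  simp only [permAct, stde_eq_single hm, stde_eq_single (w ⟨m, hm⟩).isLt, Pi.single_apply,
    Equiv.Perm.inv_eq_iff_eq]

lemma partialSum_simpleRoot {j : ℕ} (hj : j + 1 < n) (i : ℕ) :
    partialSum n i (simpleRoot n j) = if i = j then 1 else 0 := by
  simp only [simpleRoot, map_sub, partialSum_stde hj, partialSum_stde (Nat.lt_of_succ_lt hj)]
  split_ifs <;> first | omega | norm_num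

lemma partialSum_succ {m : ℕ} (h : m + 1 < n) (u : Fin n → ℚ) :
    partialSum n (m + 1) u = partialSum n m u + u ⟨m + 1, h⟩ := by
  have : univ.filter (fun k : Fin n => (k : ℕ) ≤ m + 1) =
      insert ⟨m + 1, h⟩ (univ.filter (fun k : Fin n => (k : ℕ) ≤ m)) := by
    ext k
    simp only [mem_filter, mem_univ, true_and, mem_insert, Fin.ext_iff]
    omega
  rw [partialSum_apply, partialSum_apply, this, sum_insert (by simp), add_comm]

lemma partialSum_zero_eq_apply (k : Fin n) (hk : (k : ℕ) = 0) (u : Fin n → ℚ) :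
    partialSum n 0 u = u k := by
  have : univ.filter (fun l : Fin n => (l : ℕ) ≤ 0) = {k} := by
    ext l
    simp only [nonpos_iff_eq_zero, mem_filter, mem_univ, true_and, mem_singleton, Fin.ext_iff]
    omega
  rw [partialSum_apply, this, sum_singleton]

lemma sum_range_partialSum_smul_simpleRoot_apply (u : Fin n → ℚ) {m : ℕ} (hm : m < n)
    (k : Fin n) :
    (∑ i ∈ range m, partialSum n i u • simpleRoot n i) k =
      if (k : ℕ) < m then u k else if (k : ℕ) = m then u k - partialSum n m u else 0 := by
  induction m with
  | zero =>
    simp only [range_zero, sum_empty, Pi.zero_apply, Nat.not_lt_zero, if_false]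
    split_ifs with hk
    · rw [partialSum_zero_eq_apply k hk, sub_self]
    · rfl
  | succ m ih =>
    obtain ⟨k, hk⟩ := k
    rw [sum_range_succ, Pi.add_apply, ih (by omega), partialSum_succ hm]
    simp only [Pi.smul_apply, simpleRoot, Pi.sub_apply, stde, smul_eq_mul]
    by_cases hkm : k = m + 1
    · subst hkm
      simp
    · split_ifs <;> first | omega | ring

lemma eq_sum_partialSum_smul_simpleRoot (u : Fin n → ℚ) (htot : partialSum n (n - 1) u = 0) :
    u = ∑ i ∈ range (n - 1), partialSum n i u • simpleRoot n i := by
  ext k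
  have hk := k.isLt
  rw [sum_range_partialSum_smul_simpleRoot_apply u (by omega) k, htot, sub_zero]
  split_ifs <;> first | rfl | omega

lemma rootLE_of_partialSum_nonneg {v v' : Fin n → ℚ} (htot : partialSum n (n - 1) (v' - v) = 0)
    (hnonneg : ∀ i, 0 ≤ partialSum n i (v' - v)) : rootLE n v v' :=
  ⟨fun i => partialSum n i (v' - v), hnonneg, eq_sum_partialSum_smul_simpleRoot _ htot⟩

lemma permAct_mul (w u : Equiv.Perm (Fin n)) (v : Fin n → ℚ) :
    permAct n (w * u) v = permAct n w (permAct n u v) := rfl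

lemma permAct_sub (w : Equiv.Perm (Fin n)) (u v : Fin n → ℚ) :
    permAct n w (u - v) = permAct n w u - permAct n w v := rfl

lemma permAct_neg (w : Equiv.Perm (Fin n)) (v : Fin n → ℚ) :
    permAct n w (-v) = -permAct n w v := rfl

lemma permAct_simpleRoot (w : Equiv.Perm (Fin n)) {j : ℕ} (hj : j + 1 < n) :
    permAct n w (simpleRoot n j) =
      stde n (w ⟨j, Nat.lt_of_succ_lt hj⟩) - stde n (w ⟨j + 1, hj⟩) := by
  rw [simpleRoot, permAct_sub, permAct_stde, permAct_stde]

lemma permAct_adjSwap_simpleRoot {j : ℕ} (hj : j + 1 < n) :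
    permAct n (adjSwap n j) (simpleRoot n j) = -simpleRoot n j := by
  rw [permAct_simpleRoot _ hj, adjSwap, dif_pos hj, Equiv.swap_apply_left,
    Equiv.swap_apply_right, simpleRoot, neg_sub]

lemma partialSum_permAct_simpleRoot (w : Equiv.Perm (Fin n)) {j : ℕ} (hj : j + 1 < n) (i : ℕ) :
    partialSum n i (permAct n w (simpleRoot n j)) =
      (if (w ⟨j, Nat.lt_of_succ_lt hj⟩ : ℕ) ≤ i then 1 else 0) -
        (if (w ⟨j + 1, hj⟩ : ℕ) ≤ i then 1 else 0) := by
  rw [permAct_simpleRoot w hj, map_sub, partialSum_stde (Fin.isLt _),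
    partialSum_stde (Fin.isLt _)]

variable {D : Finset ℕ}

lemma WDsum_eq_sum [Fintype (WD n D)] (v : Fin n → ℚ) :
    WDsum n D v = ∑ w : WD n D, permAct n w v := by
  rw [WDsum]
  show ∑ᶠ (w) (_ : w ∈ (WD n D : Set (Equiv.Perm (Fin n)))), permAct n w v = _
  rw [← finsum_set_coe_eq_finsum_mem, finsum_eq_sum_of_fintype]
  rfl

lemma WDsum_eq_zero_of_permAct_eq_neg {s : Equiv.Perm (Fin n)} (hs : s ∈ WD n D)
    {v : Fin n → ℚ} (hv : permAct n s v = -v) : WDsum n D v = 0 := by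
  classical
  have h : WDsum n D v = -WDsum n D v := by
    rw [WDsum_eq_sum]
    conv_lhs => rw [← Equiv.sum_comp (Equiv.mulRight (⟨s, hs⟩ : WD n D))]
    rw [← sum_neg_distrib]
    refine sum_congr rfl fun w _ => ?_
    rw [Equiv.coe_mulRight, Subgroup.coe_mul, permAct_mul, hv, permAct_neg]
  exact self_eq_neg.mp h

lemma adjSwap_mem_WD {i : ℕ} (hi : i ∈ D) : adjSwap n i ∈ WD n D :=
  Subgroup.subset_closure ⟨i, hi, rfl⟩

lemma val_apply_le_iff_of_mem_WD {j : ℕ} (hjD : j ∉ D) {w : Equiv.Perm (Fin n)}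
    (hw : w ∈ WD n D) (k : Fin n) : (w k : ℕ) ≤ j ↔ (k : ℕ) ≤ j := by
  induction hw using Subgroup.closure_induction generalizing k with
  | mem x hx =>
    obtain ⟨i, hi, rfl⟩ := hx
    have hij : i ≠ j := fun h => hjD (h ▸ hi)
    unfold adjSwap
    split_ifs
    · rw [Equiv.swap_apply_def]
      split_ifs with h1 h2 <;> simp only [Fin.ext_iff] at * <;> omega
    · rfl
  | one => rfl
  | mul x y _ _ hx hy => exact (hx (y k)).trans (hy k)
  | inv x _ hx => simpa using (hx (x⁻¹ k)).symm

lemma partialSum_simpleRoot_le_partialSum_permAct {j : ℕ} (hj : j + 1 < n)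
    {w : Equiv.Perm (Fin n)} (hw : (w ⟨j, Nat.lt_of_succ_lt hj⟩ : ℕ) ≤ j)
    (hw' : j < (w ⟨j + 1, hj⟩ : ℕ)) (i : ℕ) :
    partialSum n i (simpleRoot n j) ≤ partialSum n i (permAct n w (simpleRoot n j)) := by
  rw [partialSum_simpleRoot hj, partialSum_permAct_simpleRoot w hj]
  split_ifs <;> first | omega | norm_num

lemma card_mul_partialSum_simpleRoot_le {j : ℕ} (hj : j + 1 < n) (hjD : j ∉ D) (i : ℕ) :
    (Nat.card (WD n D) : ℚ) * partialSum n i (simpleRoot n j) ≤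
      partialSum n i (WDsum n D (simpleRoot n j)) := by
  classical
  rw [WDsum_eq_sum, map_sum, Nat.card_eq_fintype_card, ← nsmul_eq_mul, ← card_univ,
    ← sum_const]
  refine sum_le_sum fun w _ => partialSum_simpleRoot_le_partialSum_permAct hj ?_ ?_ i
  · exact (val_apply_le_iff_of_mem_WD hjD w.2 _).mpr le_rfl
  · exact lt_of_not_ge fun h => by simpa using (val_apply_le_iff_of_mem_WD hjD w.2 _).mp h

lemma partialSum_last_WDsum_simpleRoot {j : ℕ} (hj : j + 1 < n) :
    partialSum n (n - 1) (WDsum n D (simpleRoot n j)) = 0 := by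
  classical
  rw [WDsum_eq_sum, map_sum]
  refine sum_eq_zero fun w _ => ?_
  rw [partialSum_permAct_simpleRoot _ hj, if_pos (by omega), if_pos (by omega), sub_self]

end

theorem statement0_general (n : ℕ) (D : Finset ℕ) (j : ℕ) (hj : j ∈ Finset.range (n - 1)) :
    rootLE n 0 (WDsum n D (simpleRoot n j)) ∧
    (WDsum n D (simpleRoot n j) = 0 ↔ j ∈ D) ∧
    (j ∉ D →
      j ∈ suppOf n (WDsum n D (simpleRoot n j)) ∧
        rootLE n ((Nat.card ↥(WD n D) : ℚ) • simpleRoot n j) (WDsum n D (simpleRoot n j))) := by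
  have hj1 : j + 1 < n := by rw [Finset.mem_range] at hj; omega
  by_cases hjD : j ∈ D
  · have hv : WDsum n D (simpleRoot n j) = 0 :=
      WDsum_eq_zero_of_permAct_eq_neg (adjSwap_mem_WD hjD) (permAct_adjSwap_simpleRoot hj1)
    exact ⟨⟨0, fun _ => le_rfl, by simp [hv]⟩, iff_of_true hv hjD, absurd hjD⟩
  have hN : (0 : ℚ) < Nat.card (WD n D) := by exact_mod_cast Nat.card_pos
  have hbound := card_mul_partialSum_simpleRoot_le (D := D) hj1 hjD
  have htot := partialSum_last_WDsum_simpleRoot (D := D) hj1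
  have hδ := partialSum_simpleRoot hj1
  have hvj : 0 < partialSum n j (WDsum n D (simpleRoot n j)) :=
    hN.trans_le (by simpa [hδ] using hbound j)
  refine ⟨rootLE_of_partialSum_nonneg (by simpa) fun i => ?_,
    iff_of_false (fun h => by simp [h] at hvj) hjD,
    fun _ => ⟨(mem_suppOf_iff _ j).mpr ⟨mem_range.mp hj, hvj.ne'⟩,
      rootLE_of_partialSum_nonneg ?_ fun i => ?_⟩⟩
  · rw [sub_zero]
    refine le_trans ?_ (hbound i)
    rw [hδ]
    positivity
  · rw [map_sub, map_smul, htot, hδ, if_neg (by omega), smul_zero, sub_zero]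
  · rw [map_sub, map_smul, smul_eq_mul, sub_nonneg]
    exact hbound i

/-- Lemma `sumw`, §2.2, for `G = GL_n`.  Let `n ≥ 2`, `D ⊆ {0,…,n−2}`,
`j ∈ {0,…,n−2}` and set `v := Σ_{w ∈ W_D} w·α_j`.  Then (i) `0 ≤ v`; (ii) `v = 0` iff
`j ∈ D`; (iii) if `j ∉ D`, then `j ∈ supp v` and in fact `|W_D|·α_j ≤ v`. -/
theorem statement0 (n : ℕ) (hn : 2 ≤ n) (D : Finset ℕ) (hD : D ⊆ Finset.range (n - 1))
    (j : ℕ) (hj : j ∈ Finset.range (n - 1)) :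
    rootLE n 0 (WDsum n D (simpleRoot n j)) ∧
    (WDsum n D (simpleRoot n j) = 0 ↔ j ∈ D) ∧
    (j ∉ D →
      j ∈ suppOf n (WDsum n D (simpleRoot n j)) ∧
        rootLE n ((Nat.card ↥(WD n D) : ℚ) • simpleRoot n j) (WDsum n D (simpleRoot n j))) :=
  statement0_general n D j hj

end BHHMS
end

section
/- Let n ≥ 2 and D ⊆ {1,…,n−1}. Every subset X ⊆ R⁺ that is closed relative to D is a closed subset of R⁺, i.e. (i,j) ∈ X and (j,k) ∈ X imply (i,k) ∈ X. (Paper: Lemma 'gln' in §2.3; this uses that for GL_n, if α is a root of the Levi and β a positive root outside the Levi with α+β a root, then α+β = s_α(β).) -/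
/-!
Setup (§2.3 of the paper): `R⁺ = {(i,j) : 1 ≤ i < j ≤ n}` is the set of positive roots
`e_i − e_j` of `GL_n`; subsets closed relative to a subset `D ⊆ {1,…,n−1}` of simple
roots.  Permutations are taken in `Equiv.Perm ℕ`; `W_D` is generated by the
transpositions `(i, i+1)`, `i ∈ D`.
-/

namespace BHHMS

/-- The set of positive roots of `GL_n`: pairs `(i, j)` with `1 ≤ i < j ≤ n`. -/
def Rplus (n : ℕ) : Set (ℕ × ℕ) := {p | 1 ≤ p.1 ∧ p.1 < p.2 ∧ p.2 ≤ n}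

/-- A set of root pairs is closed if `(i,j) ∈ X` and `(j,k) ∈ X` imply `(i,k) ∈ X`. -/
def IsClosedSubset (X : Set (ℕ × ℕ)) : Prop :=
  ∀ i j k : ℕ, (i, j) ∈ X → (j, k) ∈ X → (i, k) ∈ X

/-- The positive roots of the Levi of the standard parabolic `P_D`: the pairs
`(i,j) ∈ R⁺` such that `k ∈ D` for all `i ≤ k ≤ j−1`. -/
def RD (n : ℕ) (D : Finset ℕ) : Set (ℕ × ℕ) :=
  {p ∈ Rplus n | ∀ k : ℕ, p.1 ≤ k → k < p.2 → k ∈ D}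

/-- The subgroup `W_D` of `Equiv.Perm ℕ` generated by the transpositions `(i, i+1)`,
`i ∈ D`. -/
def WDperm (D : Finset ℕ) : Subgroup (Equiv.Perm ℕ) :=
  Subgroup.closure {g | ∃ i ∈ D, g = Equiv.swap i (i + 1)}

/-- The action of a permutation on a pair: `w·(i,j) = (w i, w j)`. -/
def permPair (w : Equiv.Perm ℕ) (p : ℕ × ℕ) : ℕ × ℕ := (w p.1, w p.2)

/-- `X ⊆ R⁺` is closed relative to `D` if `R_D⁺ ⊆ X`, `X ∖ R_D⁺` is closed, and
`w·(X ∖ R_D⁺) = X ∖ R_D⁺` for every `w ∈ W_D`. -/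
def IsClosedRel (n : ℕ) (D : Finset ℕ) (X : Set (ℕ × ℕ)) : Prop :=
  RD n D ⊆ X ∧ IsClosedSubset (X \ RD n D) ∧
    ∀ w ∈ WDperm D, permPair w '' (X \ RD n D) = X \ RD n D

/-!
If `α = (i,j)` is a root of the Levi, then every simple root between `i` and `j` lies in `D`,
so the reflection `s_α`, the transposition `(i j)`, lies in `W_D`. For a root `β` outside the
Levi with `α + β` a root, `α + β = s_α β`, so the `W_D`-invariance of `X ∖ R_D⁺` gives
`α + β ∈ X`. Sums of two Levi roots are Levi roots, and sums of two roots outside the Levi are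
handled by the closedness of `X ∖ R_D⁺`.
-/

open Equiv

theorem isClosedSubset_RD (n : ℕ) (D : Finset ℕ) : IsClosedSubset (RD n D) := by
  rintro i j k ⟨⟨hi, hij, -⟩, hijD⟩ ⟨⟨-, hjk, hk⟩, hjkD⟩
  refine ⟨⟨hi, hij.trans hjk, hk⟩, fun m him hmk => ?_⟩
  rcases lt_or_ge m j with hmj | hjm
  · exact hijD m him hmj
  · exact hjkD m hjm hmk

theorem swap_mem_WDperm {D : Finset ℕ} {a b : ℕ} (hab : a ≤ b)
    (hD : ∀ m, a ≤ m → m < b → m ∈ D) : swap a b ∈ WDperm D := by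
  induction b, hab using Nat.le_induction with
  | base => exact swap_self a ▸ (WDperm D).one_mem
  | succ b hab ih =>
    have hgen : swap b (b + 1) ∈ WDperm D :=
      Subgroup.subset_closure ⟨b, hD b hab (Nat.lt_succ_self b), rfl⟩
    rcases hab.eq_or_lt with rfl | hab
    · exact hgen
    · have hconj : swap b (b + 1) * swap a b * swap b (b + 1) = swap (b + 1) a :=
        swap_mul_swap_mul_swap hab.ne (by omega)
      rw [swap_comm, ← hconj]
      exact mul_mem (mul_mem hgen (ih fun m ham hmb => hD m ham (hmb.trans b.lt_succ_self))) hgen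

theorem swap_mem_WDperm_of_mem_RD {n : ℕ} {D : Finset ℕ} {i j : ℕ} (h : (i, j) ∈ RD n D) :
    swap i j ∈ WDperm D :=
  swap_mem_WDperm h.1.2.1.le h.2

section Invariant

variable {n : ℕ} {D : Finset ℕ} {S : Set (ℕ × ℕ)}

theorem permPair_mem (hS : ∀ w ∈ WDperm D, permPair w '' S = S) {w : Perm ℕ}
    (hw : w ∈ WDperm D) {p : ℕ × ℕ} (hp : p ∈ S) : permPair w p ∈ S :=
  hS w hw ▸ Set.mem_image_of_mem _ hp

theorem mk_mem_of_mem_RD_of_mem (hS : ∀ w ∈ WDperm D, permPair w '' S = S) {i j k : ℕ}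
    (hij : (i, j) ∈ RD n D) (hjk : (j, k) ∈ S) (hjk' : j < k) : (i, k) ∈ S := by
  have hmem := permPair_mem hS (swap_mem_WDperm_of_mem_RD hij) hjk
  rwa [permPair, swap_apply_right, swap_apply_of_ne_of_ne (hij.1.2.1.trans hjk').ne' hjk'.ne']
    at hmem

theorem mk_mem_of_mem_of_mem_RD (hS : ∀ w ∈ WDperm D, permPair w '' S = S) {i j k : ℕ}
    (hij : (i, j) ∈ S) (hjk : (j, k) ∈ RD n D) (hij' : i < j) : (i, k) ∈ S := by
  have hmem := permPair_mem hS (swap_mem_WDperm_of_mem_RD hjk) hij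
  rwa [permPair, swap_apply_left, swap_apply_of_ne_of_ne hij'.ne (hij'.trans hjk.1.2.1).ne]
    at hmem

end Invariant

theorem statement8_general (n : ℕ) (D : Finset ℕ)
    (X : Set (ℕ × ℕ)) (hX : X ⊆ Rplus n) (h : IsClosedRel n D X) :
    IsClosedSubset X := by
  obtain ⟨hRD, hcl, hinv⟩ := h
  intro i j k hij hjk
  have hij' : i < j := (hX hij).2.1
  have hjk' : j < k := (hX hjk).2.1
  by_cases h1 : (i, j) ∈ RD n D <;> by_cases h2 : (j, k) ∈ RD n D
  · exact hRD (isClosedSubset_RD n D i j k h1 h2)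
  · exact (mk_mem_of_mem_RD_of_mem hinv h1 ⟨hjk, h2⟩ hjk').1
  · exact (mk_mem_of_mem_of_mem_RD hinv ⟨hij, h1⟩ h2 hij').1
  · exact (hcl i j k ⟨hij, h1⟩ ⟨hjk, h2⟩).1

/-- Lemma `gln`, §2.3.  Every subset `X ⊆ R⁺` closed relative to `D`
is a closed subset of `R⁺`. -/
theorem statement8 (n : ℕ) (hn : 2 ≤ n) (D : Finset ℕ) (hD : D ⊆ Finset.Icc 1 (n - 1))
    (X : Set (ℕ × ℕ)) (hX : X ⊆ Rplus n) (h : IsClosedRel n D X) :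
    IsClosedSubset X :=
  statement8_general n D X hX h

end BHHMS
end

section
/- Let n ≥ 2, D ⊆ {1,…,n−1}, and let X ⊆ R⁺ be closed relative to D. Then there exist an integer m ≥ 0 and roots α_1,…,α_m ∈ R⁺∖X such that R⁺ is the disjoint union of X and of the W_D-orbits W_D·α_1, …, W_D·α_m, and such that for every 1 ≤ i ≤ m the root α_i does not lie in the smallest subset of R⁺ closed relative to D containing X ∪ {α_1,…,α_{i−1}} (this smallest subset exists since an intersection of subsets closed relative to D is closed relative to D). (Paper: Lemma 'orderw' in §2.3.) -/
/-!
Setup (§2.3 of the paper): `R⁺ = {(i,j) : 1 ≤ i < j ≤ n}` is the set of positive roots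
`e_i − e_j` of `GL_n`; subsets closed relative to a subset `D ⊆ {1,…,n−1}` of simple
roots.  Permutations are taken in `Equiv.Perm ℕ`; `W_D` is generated by the
transpositions `(i, i+1)`, `i ∈ D`.
-/

namespace BHHMS

/-- The `W_D`-orbit of a root pair. -/
def WDorbit (D : Finset ℕ) (a : ℕ × ℕ) : Set (ℕ × ℕ) := {p | ∃ w ∈ WDperm D, permPair w a = p}

/-- The smallest subset of `R⁺` containing `S` which is closed relative to `D` (it exists
since an intersection of subsets closed relative to `D` is closed relative to `D`). -/
def closureRel (n : ℕ) (D : Finset ℕ) (S : Set (ℕ × ℕ)) : Set (ℕ × ℕ) :=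
  ⋂₀ {Y | S ⊆ Y ∧ Y ⊆ Rplus n ∧ IsClosedRel n D Y}

end BHHMS

/-!
Every `w ∈ W_D` preserves each cut `{i | i ≤ k}` with `k ∉ D`, hence preserves the number
`numWalls D α` of simple roots outside `D` occurring in a root `α`; this number is additive and
vanishes exactly on `R_D⁺`. List representatives of the `W_D`-orbits in `R⁺ ∖ X` by decreasing
`numWalls`. If `α_i` has `t` walls, then `X`, together with all roots having at least `t` walls
except those in the orbit of `α_i`, is closed relative to `D`: a sum of two roots not both in `X`
has more than `t` walls. This set contains `X` and the earlier `α_j`, but not `α_i`.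
-/

theorem Finset.exists_fin_enum_antitone {α β : Type*} [LinearOrder β] (s : Finset α)
    (f : α → β) :
    ∃ (m : ℕ) (c : Fin m → α), Function.Injective c ∧ Set.range c = s ∧ Antitone (f ∘ c) := by
  let e : Fin s.card ≃ s := s.equivFin.symm
  let σ := Tuple.sort fun i => OrderDual.toDual (f (e i))
  refine ⟨s.card, fun i => e (σ i), Subtype.val_injective.comp (e.injective.comp σ.injective),
    ?_, fun _ _ hij => Tuple.monotone_sort (fun i => OrderDual.toDual (f (e i))) hij⟩
  ext x
  refine ⟨?_, fun hx => ⟨σ.symm (e.symm ⟨x, hx⟩), by simp⟩⟩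
  rintro ⟨i, rfl⟩
  exact (e (σ i)).2

open MulAction in
theorem MulAction.exists_antitone_orbit_reps {G α β : Type*} [Group G] [MulAction G α]
    [LinearOrder β] {Q : Set α} (hQ : Q.Finite) (hQG : ∀ q ∈ Q, orbit G q ⊆ Q) (f : α → β) :
    ∃ (m : ℕ) (a : Fin m → α), (∀ i, a i ∈ Q) ∧ Q = ⋃ i, orbit G (a i) ∧
      Pairwise (fun i j => Disjoint (orbit G (a i)) (orbit G (a j))) ∧ Antitone (f ∘ a) := by
  classical
  obtain ⟨m, c, hc, hrange, hanti⟩ :=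
    (hQ.toFinset.image (Quotient.mk'' : α → orbitRel.Quotient G α)).exists_fin_enum_antitone
      fun x => f x.out
  have mem_orbit_out (i : Fin m) (x : α) : x ∈ orbit G (c i).out ↔ Quotient.mk'' x = c i := by
    rw [← orbitRel.Quotient.orbit_eq_orbit_out _ Quotient.out_eq', orbitRel.Quotient.mem_orbit]
  have hcQ (i : Fin m) : ∃ q ∈ Q, Quotient.mk'' q = c i := by
    have : c i ∈ Set.range c := ⟨i, rfl⟩
    simpa [hrange] using this
  have out_mem (i : Fin m) : (c i).out ∈ Q := by
    obtain ⟨q, hq, hqc⟩ := hcQ i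
    exact hQG q hq (mem_orbit_symm.1 ((mem_orbit_out i q).2 hqc))
  refine ⟨m, fun i => (c i).out, out_mem, ?_, ?_, hanti⟩
  · refine subset_antisymm (fun q hq => ?_) (Set.iUnion_subset fun i => hQG _ (out_mem i))
    have : Quotient.mk'' q ∈ Set.range c := by
      rw [hrange]
      exact Finset.mem_image_of_mem _ (hQ.mem_toFinset.2 hq)
    obtain ⟨i, hi⟩ := this
    exact Set.mem_iUnion.2 ⟨i, (mem_orbit_out i q).2 hi.symm⟩
  · intro i j hij
    refine Set.disjoint_left.2 fun x hxi hxj => hij (hc ?_)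
    rw [← (mem_orbit_out i x).1 hxi, (mem_orbit_out j x).1 hxj]

namespace BHHMS

def cutStabilizer (D : Finset ℕ) : Subgroup (Equiv.Perm ℕ) where
  carrier := {w | ∀ k ∉ D, ∀ i, w i ≤ k ↔ i ≤ k}
  one_mem' := by simp
  mul_mem' {w v} hw hv k hk i := (hw k hk (v i)).trans (hv k hk i)
  inv_mem' {w} hw k hk i := by simpa using (hw k hk (w⁻¹ i)).symm

theorem WDperm_le_cutStabilizer (D : Finset ℕ) : WDperm D ≤ cutStabilizer D := by
  refine Subgroup.closure_le _ |>.2 ?_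
  rintro _ ⟨d, hd, rfl⟩ k hk i
  have hdk : d ≠ k := by rintro rfl; exact hk hd
  rcases eq_or_ne i d with rfl | h1
  · simp only [Equiv.swap_apply_left]; omega
  rcases eq_or_ne i (d + 1) with rfl | h2
  · simp only [Equiv.swap_apply_right]; omega
  · rw [Equiv.swap_apply_of_ne_of_ne h1 h2]

theorem apply_le_iff_of_mem_WDperm {D : Finset ℕ} {w : Equiv.Perm ℕ} (hw : w ∈ WDperm D)
    {k : ℕ} (hk : k ∉ D) (i : ℕ) : w i ≤ k ↔ i ≤ k :=
  WDperm_le_cutStabilizer D hw k hk i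

theorem Rplus_finite (n : ℕ) : (Rplus n).Finite :=
  (Set.finite_Iic (n, n)).subset fun _ hp => ⟨by have := hp.2.1; have := hp.2.2; omega, hp.2.2⟩

/-- The number of simple roots `e_k − e_{k+1}` with `k ∉ D` occurring in `e_i − e_j`. -/
def numWalls (D : Finset ℕ) (p : ℕ × ℕ) : ℕ := {k ∈ Finset.Ico p.1 p.2 | k ∉ D}.card

theorem numWalls_add (D : Finset ℕ) {i j l : ℕ} (hij : i ≤ j) (hjl : j ≤ l) :
    numWalls D (i, l) = numWalls D (i, j) + numWalls D (j, l) := by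
  rw [numWalls, ← Finset.Ico_union_Ico_eq_Ico hij hjl, Finset.filter_union,
    Finset.card_union_of_disjoint
      (Finset.disjoint_filter_filter (Finset.Ico_disjoint_Ico_consecutive i j l))]
  rfl

theorem numWalls_permPair {D : Finset ℕ} {w : Equiv.Perm ℕ} (hw : w ∈ WDperm D) (p : ℕ × ℕ) :
    numWalls D (permPair w p) = numWalls D p := by
  unfold numWalls
  congr 1
  ext k
  simp only [Finset.mem_filter, Finset.mem_Ico, permPair, and_congr_left_iff]
  intro hk
  rw [apply_le_iff_of_mem_WDperm hw hk, ← not_le, apply_le_iff_of_mem_WDperm hw hk, not_le]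

theorem mem_RD_iff_numWalls_eq_zero {n : ℕ} {D : Finset ℕ} {p : ℕ × ℕ} (hp : p ∈ Rplus n) :
    p ∈ RD n D ↔ numWalls D p = 0 := by
  simp [RD, hp, numWalls, Finset.filter_eq_empty_iff, and_imp]

theorem permPair_mem_Rplus {n : ℕ} {D : Finset ℕ} (h0 : 0 ∉ D) (hn : n ∉ D)
    {w : Equiv.Perm ℕ} (hw : w ∈ WDperm D) {p : ℕ × ℕ} (hp : p ∈ Rplus n)
    (hpD : numWalls D p ≠ 0) : permPair w p ∈ Rplus n := by
  obtain ⟨hp1, -, hp2⟩ := hp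
  rw [← numWalls_permPair hw, numWalls, Finset.card_ne_zero] at hpD
  obtain ⟨k, hk⟩ := hpD
  simp only [Finset.mem_filter, Finset.mem_Ico, permPair] at hk
  have h1 := apply_le_iff_of_mem_WDperm hw h0 p.1
  have h2 := apply_le_iff_of_mem_WDperm hw hn p.2
  exact ⟨show 1 ≤ w p.1 by omega, show w p.1 < w p.2 by omega, h2.2 hp2⟩

@[simp]
theorem permPair_inv_permPair (w : Equiv.Perm ℕ) (p : ℕ × ℕ) :
    permPair w⁻¹ (permPair w p) = p := by
  simp [permPair]

theorem permPair_mul (w v : Equiv.Perm ℕ) (p : ℕ × ℕ) :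
    permPair (w * v) p = permPair w (permPair v p) := rfl

theorem image_permPair_eq_of_forall_mem {D : Finset ℕ} {Z : Set (ℕ × ℕ)}
    (hZ : ∀ w ∈ WDperm D, ∀ p ∈ Z, permPair w p ∈ Z) :
    ∀ w ∈ WDperm D, permPair w '' Z = Z := by
  refine fun w hw => subset_antisymm (Set.image_subset_iff.2 fun p => hZ w hw p) fun p hp => ?_
  exact ⟨permPair w⁻¹ p, hZ _ (inv_mem hw) p hp, by rw [← permPair_mul, mul_inv_cancel]; rfl⟩

theorem mem_WDorbit_self (D : Finset ℕ) (p : ℕ × ℕ) : p ∈ WDorbit D p :=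
  ⟨1, one_mem _, rfl⟩

theorem WDorbit_eq_orbit (D : Finset ℕ) (p : ℕ × ℕ) :
    WDorbit D p = MulAction.orbit (WDperm D) p := by
  ext q
  exact ⟨fun ⟨w, hw, h⟩ => ⟨⟨w, hw⟩, h⟩, fun ⟨⟨w, hw⟩, h⟩ => ⟨w, hw, h⟩⟩

theorem WDorbit_subset_diff {n : ℕ} {D : Finset ℕ} (h0 : 0 ∉ D) (hn : n ∉ D)
    {X : Set (ℕ × ℕ)} (hX : IsClosedRel n D X) {p : ℕ × ℕ} (hp : p ∈ Rplus n \ X) :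
    WDorbit D p ⊆ Rplus n \ X := by
  rintro _ ⟨w, hw, rfl⟩
  have hpD : numWalls D p ≠ 0 := fun h => hp.2 (hX.1 ((mem_RD_iff_numWalls_eq_zero hp.1).2 h))
  have hwp := permPair_mem_Rplus h0 hn hw hp.1 hpD
  refine ⟨hwp, fun hwX => hp.2 ?_⟩
  have hwRD : permPair w p ∉ RD n D := by
    rwa [mem_RD_iff_numWalls_eq_zero hwp, numWalls_permPair hw]
  have : permPair w⁻¹ (permPair w p) ∈ X \ RD n D := by
    rw [← hX.2.2 w⁻¹ (inv_mem hw)]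
    exact Set.mem_image_of_mem _ ⟨hwX, hwRD⟩
  simpa using this.1

theorem isClosedRel_union_diff_WDorbit {n : ℕ} {D : Finset ℕ} (h0 : 0 ∉ D) (hn : n ∉ D)
    {X : Set (ℕ × ℕ)} (hXR : X ⊆ Rplus n) (hX : IsClosedRel n D X) {α : ℕ × ℕ}
    (hα : numWalls D α ≠ 0) :
    IsClosedRel n D (X ∪ ({q ∈ Rplus n | numWalls D α ≤ numWalls D q} \ WDorbit D α)) := by
  set L := {q ∈ Rplus n | numWalls D α ≤ numWalls D q} \ WDorbit D α
  have hL_pos {q : ℕ × ℕ} (hq : q ∈ L) : numWalls D q ≠ 0 := by have := hq.1.2; omega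
  have hdiff : (X ∪ L) \ RD n D = X \ RD n D ∪ L := by
    ext q
    constructor
    · rintro ⟨hq | hq, hqD⟩
      exacts [Or.inl ⟨hq, hqD⟩, Or.inr hq]
    · rintro (⟨hq, hqD⟩ | hq)
      exacts [⟨Or.inl hq, hqD⟩,
        ⟨Or.inr hq, fun hqD => hL_pos hq ((mem_RD_iff_numWalls_eq_zero hq.1.1).1 hqD)⟩]
  have hpos {q : ℕ × ℕ} (hq : q ∈ X \ RD n D ∪ L) : q ∈ Rplus n ∧ numWalls D q ≠ 0 := by
    rcases hq with ⟨hqX, hqD⟩ | hq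
    · exact ⟨hXR hqX, by rwa [ne_eq, ← mem_RD_iff_numWalls_eq_zero (hXR hqX)]⟩
    · exact ⟨hq.1.1, hL_pos hq⟩
  refine ⟨fun q hq => Or.inl (hX.1 hq), ?_, ?_⟩ <;> rw [hdiff]
  · intro a b c hab hbc
    by_cases hXab : (a, b) ∈ X \ RD n D ∧ (b, c) ∈ X \ RD n D
    · exact Or.inl (hX.2.1 a b c hXab.1 hXab.2)
    obtain ⟨⟨ha, hab', -⟩, hab0⟩ : (1 ≤ a ∧ a < b ∧ b ≤ n) ∧ numWalls D (a, b) ≠ 0 := hpos hab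
    obtain ⟨⟨-, hbc', hc⟩, hbc0⟩ : (1 ≤ b ∧ b < c ∧ c ≤ n) ∧ numWalls D (b, c) ≠ 0 := hpos hbc
    have hlt : numWalls D α < numWalls D (a, c) := by
      have hL : (a, b) ∈ L ∨ (b, c) ∈ L := by
        simp only [Set.mem_union] at hab hbc; tauto
      have := numWalls_add D hab'.le hbc'.le
      rcases hL with h | h
      · have := h.1.2; omega
      · have := h.1.2; omega
    refine Or.inr ⟨⟨⟨ha, hab'.trans hbc', hc⟩, hlt.le⟩, ?_⟩
    rintro ⟨w, hw, hwα⟩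
    rw [← hwα, numWalls_permPair hw] at hlt
    exact lt_irrefl _ hlt
  · refine image_permPair_eq_of_forall_mem fun w hw q hq => ?_
    rcases hq with hq | hq
    · exact Or.inl (hX.2.2 w hw ▸ Set.mem_image_of_mem _ hq)
    refine Or.inr ⟨⟨permPair_mem_Rplus h0 hn hw hq.1.1 (hL_pos hq), ?_⟩, ?_⟩
    · rw [numWalls_permPair hw]
      exact hq.1.2
    · rintro ⟨v, hv, hvq⟩
      refine hq.2 ⟨w⁻¹ * v, mul_mem (inv_mem hw) hv, ?_⟩
      rw [permPair_mul, hvq, permPair_inv_permPair]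

theorem notMem_closureRel_union {n : ℕ} {D : Finset ℕ} (h0 : 0 ∉ D) (hn : n ∉ D)
    {X P : Set (ℕ × ℕ)} (hXR : X ⊆ Rplus n) (hX : IsClosedRel n D X) {α : ℕ × ℕ}
    (hα : α ∈ Rplus n \ X) (hPR : P ⊆ Rplus n)
    (hP : ∀ p ∈ P, numWalls D α ≤ numWalls D p ∧ p ∉ WDorbit D α) :
    α ∉ closureRel n D (X ∪ P) := by
  have hα0 : numWalls D α ≠ 0 := fun h => hα.2 (hX.1 ((mem_RD_iff_numWalls_eq_zero hα.1).2 h))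
  intro hmem
  refine (Set.mem_sInter.1 hmem _ ⟨?_, ?_, isClosedRel_union_diff_WDorbit h0 hn hXR hX hα0⟩).elim
    hα.2 fun h => h.2 (mem_WDorbit_self D α)
  · exact Set.union_subset_union_right X fun p hp => ⟨⟨hPR hp, (hP p hp).1⟩, (hP p hp).2⟩
  · exact Set.union_subset hXR fun q hq => hq.1.1

theorem statement9_general (n : ℕ) (D : Finset ℕ) (hD : D ⊆ Finset.Icc 1 (n - 1))
    (X : Set (ℕ × ℕ)) (hX : X ⊆ Rplus n) (h : IsClosedRel n D X) :
    ∃ (m : ℕ) (a : Fin m → ℕ × ℕ),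
      (∀ i, a i ∈ Rplus n \ X) ∧
      (Rplus n = X ∪ ⋃ i, WDorbit D (a i)) ∧
      (∀ i, Disjoint X (WDorbit D (a i))) ∧
      (∀ i j : Fin m, i ≠ j → Disjoint (WDorbit D (a i)) (WDorbit D (a j))) ∧
      (∀ i : Fin m, a i ∉ closureRel n D (X ∪ {p | ∃ j : Fin m, j < i ∧ a j = p})) := by
  have h0 : 0 ∉ D := fun h0 => by simpa using hD h0
  have hnD : n ∉ D := fun hnD => by have := Finset.mem_Icc.1 (hD hnD); omega
  obtain ⟨m, a, haQ, hcover, hdisj, hanti⟩ :=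
    MulAction.exists_antitone_orbit_reps (Rplus_finite n).sdiff
      (fun q hq => WDorbit_eq_orbit D q ▸ WDorbit_subset_diff h0 hnD h hq) (numWalls D)
  simp only [← WDorbit_eq_orbit] at hcover hdisj
  refine ⟨m, a, haQ, ?_, fun i => ?_, hdisj, fun i => ?_⟩
  · rw [← hcover, Set.union_sdiff_cancel hX]
  · exact Set.disjoint_of_subset_right (hcover ▸ Set.subset_iUnion _ i) Set.disjoint_sdiff_right
  refine notMem_closureRel_union h0 hnD hX h (haQ i) ?_ ?_
  · rintro _ ⟨j, -, rfl⟩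
    exact (haQ j).1
  · rintro _ ⟨j, hji, rfl⟩
    exact ⟨hanti hji.le, Set.disjoint_left.1 (hdisj hji.ne) (mem_WDorbit_self D (a j))⟩

/-- Lemma `orderw`, §2.3.  For `X ⊆ R⁺` closed relative to `D` there are
roots `α_1, …, α_m ∈ R⁺ ∖ X` such that `R⁺` is the disjoint union of `X` and of the
`W_D`-orbits of the `α_i`, and such that each `α_i` does not lie in the smallest subset
closed relative to `D` containing `X ∪ {α_1,…,α_{i−1}}`. -/
theorem statement9 (n : ℕ) (hn : 2 ≤ n) (D : Finset ℕ) (hD : D ⊆ Finset.Icc 1 (n - 1))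
    (X : Set (ℕ × ℕ)) (hX : X ⊆ Rplus n) (h : IsClosedRel n D X) :
    ∃ (m : ℕ) (a : Fin m → ℕ × ℕ),
      (∀ i, a i ∈ Rplus n \ X) ∧
      (Rplus n = X ∪ ⋃ i, WDorbit D (a i)) ∧
      (∀ i, Disjoint X (WDorbit D (a i))) ∧
      (∀ i j : Fin m, i ≠ j → Disjoint (WDorbit D (a i)) (WDorbit D (a j))) ∧
      (∀ i : Fin m, a i ∉ closureRel n D (X ∪ {p | ∃ j : Fin m, j < i ∧ a j = p})) :=
  statement9_general n D hD X hX h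

end BHHMS
end

section
/- Let M be an R-module and let ψ : M → M be an additive map satisfying ψ(φ(a)·x) = a·ψ(x) for all a ∈ R and x ∈ M (equivalently: ψ is 𝔽-linear and ψ(Y_{i−1}^p·x) = Y_i·ψ(x) for all i, indices modulo f). Then for every integer n ≥ 0 one has ψ(m^{pf−(f−1)+pn}·M) ⊆ m^{n+1}·M. Consequently, for every n ≥ pf−(f−1) one has ψ(m^n·M) ⊆ m^{⌈n/p⌉−f}·M. (Paper: Lemma 'lem:psicontinueN0' in §3.1.2.) -/
/-!
A monomial of degree `(p - 1) f + p n + 1` in `f` variables has exponents `a i = p b i + r i`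
with `r i ≤ p - 1`, so `∑ b i ≥ n + 1` and the monomial is divisible by `∏ (Y_i ^ p) ^ b i`.
Since `Y_{i-1} ^ p = φ Y_i`, this shows `m ^ (pf - (f - 1) + pn) ⊆ φ(m ^ (n + 1)) · R`, and the
semilinearity `ψ (φ a • x) = a • ψ x` carries this inclusion over to `ψ`. The second assertion is
the first one for the largest admissible `n`.
-/

namespace BHHMS

/-- The maximal ideal `m = (Y_0, …, Y_{f−1})` of `𝔽[[Y_0,…,Y_{f−1}]]`. -/
noncomputable def mIdeal (𝔽 : Type*) [Field 𝔽] (f : ℕ) : Ideal (MvPowerSeries (Fin f) 𝔽) :=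
  Ideal.span (Set.range (MvPowerSeries.X : Fin f → MvPowerSeries (Fin f) 𝔽))

section Monomials

open scoped Pointwise

variable {R σ : Type*} [CommSemiring R] [Fintype σ] (X : σ → R)

theorem exists_prod_pow_eq_of_mem_range_pow {N : ℕ} {r : R} (hr : r ∈ Set.range X ^ N) :
    ∃ a : σ → ℕ, ∑ i, a i = N ∧ r = ∏ i, X i ^ a i := by
  classical
  obtain ⟨g, rfl⟩ := Set.mem_pow.1 hr
  choose c hc using fun j => (g j).2
  refine ⟨fun i => (Finset.univ.filter fun j => c j = i).card, ?_, ?_⟩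
  · simpa using (Finset.card_eq_sum_card_fiberwise (f := c) (s := Finset.univ)
      (t := Finset.univ) fun j _ => Finset.mem_univ _).symm
  · rw [List.prod_ofFn, ← Finset.prod_fiberwise Finset.univ c]
    refine Finset.prod_congr rfl fun i _ => ?_
    rw [← Finset.prod_const, ← Finset.prod_congr rfl fun j hj => by
      rw [← hc j, (Finset.mem_filter.1 hj).2]]

theorem prod_pow_mem_span_pow_pow {p n : ℕ} (hp : 0 < p) (a : σ → ℕ)
    (ha : (p - 1) * Fintype.card σ + p * n + 1 ≤ ∑ i, a i) :
    ∏ i, X i ^ a i ∈ Ideal.span (Set.range fun i => X i ^ p) ^ (n + 1) := by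
  set b : σ → ℕ := fun i => a i / p
  have hsplit : ∏ i, X i ^ a i = (∏ i, (X i ^ p) ^ b i) * ∏ i, X i ^ (a i % p) := by
    rw [← Finset.prod_mul_distrib]
    refine Finset.prod_congr rfl fun i _ => ?_
    rw [← pow_mul, ← pow_add, Nat.div_add_mod]
  have hb : n + 1 ≤ ∑ i, b i := by
    have hrem : ∑ i, a i % p ≤ (p - 1) * Fintype.card σ := by
      simpa [mul_comm] using Finset.sum_le_sum fun i (_ : i ∈ Finset.univ) =>
        Nat.le_sub_one_of_lt (Nat.mod_lt (a i) hp)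
    have hdecomp : ∑ i, a i = p * ∑ i, b i + ∑ i, a i % p := by
      rw [Finset.mul_sum, ← Finset.sum_add_distrib]
      exact Finset.sum_congr rfl fun i _ => (Nat.div_add_mod (a i) p).symm
    by_contra! h
    have : p * ∑ i, b i ≤ p * n := Nat.mul_le_mul_left p (by omega)
    omega
  have hmem : ∏ i, (X i ^ p) ^ b i ∈ Ideal.span (Set.range fun i => X i ^ p) ^ ∑ i, b i := by
    rw [← Finset.prod_pow_eq_pow_sum]
    exact Ideal.prod_mem_prod fun i _ =>
      Ideal.pow_mem_pow (Ideal.subset_span (Set.mem_range_self i)) _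
  rw [hsplit]
  exact Ideal.mul_mem_right _ _ (Ideal.pow_le_pow_right hb hmem)

theorem span_range_pow_le_span_range_pow_pow {p : ℕ} (hp : 0 < p) (n : ℕ) :
    Ideal.span (Set.range X) ^ ((p - 1) * Fintype.card σ + p * n + 1) ≤
      Ideal.span (Set.range fun i => X i ^ p) ^ (n + 1) := by
  rw [Ideal.span, Submodule.span_pow, Submodule.span_le]
  intro r hr
  obtain ⟨a, ha, rfl⟩ := exists_prod_pow_eq_of_mem_range_pow X hr
  exact prod_pow_mem_span_pow_pow X hp a ha.ge

end Monomials

theorem mem_smul_top_of_le_map {R S M N : Type*} [CommSemiring R] [CommSemiring S]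
    [AddCommMonoid M] [Module R M] [AddCommMonoid N] [Module S N] (φ : S →+* R) (ψ : M →+ N)
    (hψ : ∀ (a : S) (x : M), ψ (φ a • x) = a • ψ x) {I : Ideal R} {J : Ideal S}
    (hIJ : I ≤ J.map φ) {x : M} (hx : x ∈ I • (⊤ : Submodule R M)) :
    ψ x ∈ J • (⊤ : Submodule S N) := by
  refine Submodule.smul_induction_on (Submodule.smul_mono_left hIJ hx) ?_
    fun y z hy hz => by simpa only [map_add] using add_mem hy hz
  intro r hr
  induction hr using Submodule.span_induction with
  | mem _ h =>
    obtain ⟨a, ha, rfl⟩ := h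
    intro y _
    rw [hψ]
    exact Submodule.smul_mem_smul ha Submodule.mem_top
  | zero => simp
  | add r s _ _ hr hs =>
    intro y _
    rw [add_smul, map_add]
    exact add_mem (hr y trivial) (hs y trivial)
  | smul c r _ hr =>
    intro y _
    rw [smul_eq_mul, mul_comm, mul_smul]
    exact hr _ trivial

theorem mIdeal_pow_le_map_pow (𝔽 : Type*) [Field 𝔽] {p f : ℕ} (hp : 0 < p) [NeZero f]
    (φ : MvPowerSeries (Fin f) 𝔽 →+* MvPowerSeries (Fin f) 𝔽)
    (hφ : ∀ i : Fin f, φ (MvPowerSeries.X i) = MvPowerSeries.X (i - 1) ^ p) (n : ℕ) :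
    mIdeal 𝔽 f ^ (p * f - (f - 1) + p * n) ≤ (mIdeal 𝔽 f ^ (n + 1)).map φ := by
  have hdeg : p * f - (f - 1) + p * n = (p - 1) * Fintype.card (Fin f) + p * n + 1 := by
    have : 1 ≤ f := NeZero.one_le
    rw [Fintype.card_fin, Nat.sub_mul, one_mul]
    have : f ≤ p * f := Nat.le_mul_of_pos_left f hp
    omega
  have hgens : Set.range (fun i : Fin f => (MvPowerSeries.X i : MvPowerSeries (Fin f) 𝔽) ^ p) =
      φ '' Set.range MvPowerSeries.X := by
    rw [← Set.range_comp,
      ← (Equiv.addRight (1 : Fin f)).surjective.range_comp (φ ∘ MvPowerSeries.X)]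
    congr 1
    funext i
    simp [hφ]
  rw [Ideal.map_pow, mIdeal, Ideal.map_span, ← hgens, hdeg]
  exact span_range_pow_le_span_range_pow_pow _ hp n

/-- Lemma `lem:psicontinueN0`, §3.1.2.  If `ψ : M → M` is additive and
satisfies `ψ (φ a • x) = a • ψ x`, then `ψ (m^{pf−(f−1)+pn}·M) ⊆ m^{n+1}·M` for all
`n ≥ 0`, and consequently `ψ (m^n·M) ⊆ m^{⌈n/p⌉−f}·M` for all `n ≥ pf−(f−1)`. -/
theorem statement10 (𝔽 : Type*) [Field 𝔽] (p f : ℕ) (hp : p.Prime) [NeZero f]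
    (φ : MvPowerSeries (Fin f) 𝔽 →+* MvPowerSeries (Fin f) 𝔽)
    (hφ : ∀ i : Fin f, φ (MvPowerSeries.X i) = MvPowerSeries.X (i - 1) ^ p)
    (M : Type*) [AddCommGroup M] [Module (MvPowerSeries (Fin f) 𝔽) M] (ψ : M →+ M)
    (hψ : ∀ (a : MvPowerSeries (Fin f) 𝔽) (x : M), ψ (φ a • x) = a • ψ x) :
    (∀ (n : ℕ) (x : M),
        x ∈ (mIdeal 𝔽 f ^ (p * f - (f - 1) + p * n)) •
              (⊤ : Submodule (MvPowerSeries (Fin f) 𝔽) M) →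
        ψ x ∈ (mIdeal 𝔽 f ^ (n + 1)) • (⊤ : Submodule (MvPowerSeries (Fin f) 𝔽) M)) ∧
    (∀ n : ℕ, p * f - (f - 1) ≤ n → ∀ x : M,
        x ∈ (mIdeal 𝔽 f ^ n) • (⊤ : Submodule (MvPowerSeries (Fin f) 𝔽) M) →
        ψ x ∈ (mIdeal 𝔽 f ^ ((n + p - 1) / p - f)) •
              (⊤ : Submodule (MvPowerSeries (Fin f) 𝔽) M)) := by
  have first := fun n (x : M) =>
    mem_smul_top_of_le_map φ ψ hψ (mIdeal_pow_le_map_pow 𝔽 hp.pos φ hφ n) (x := x)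
  refine ⟨first, fun n _ x hx => ?_⟩
  obtain hk | hk := Nat.eq_zero_or_pos ((n + p - 1) / p - f)
  · simp [hk, Ideal.one_eq_top]
  -- `(n + p - 1) / p` is `⌈n / p⌉`, so `p * ((n + p - 1) / p - 1) < n`
  have hle : p * f - (f - 1) + p * ((n + p - 1) / p - f - 1) ≤ n := by
    have hceil := Nat.div_mul_le_self (n + p - 1) p
    have hsplit : p * ((n + p - 1) / p - f - 1) + p + p * f = (n + p - 1) / p * p := by
      rw [← mul_add_one, Nat.sub_one_add_one hk.ne', ← mul_add, Nat.sub_add_cancel (by omega),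
        mul_comm]
    have := hp.pos
    omega
  simpa [Nat.sub_add_cancel hk] using
    first _ x (Submodule.smul_mono_left (Ideal.pow_le_pow_right hle) hx)

end BHHMS
end

section
/- Let M be a torsion 𝔽[[Y]]-module and Σ a set of nonzero elements of M spanning M as an 𝔽-vector space such that: (i) Y·Σ ⊆ Σ̃ ∪ {0}; (ii) if v₁, v₂ ∈ Σ satisfy 𝔽·Yv₁ = 𝔽·Yv₂ ≠ 0 then v₁ = v₂; (iii) Σ ∩ M[Y] is a finite set of 𝔽-linearly independent vectors. Then Σ is an 𝔽-basis of M and M[Y] is spanned over 𝔽 by Σ ∩ M[Y] (in particular M[Y] is finite-dimensional, i.e. M is an admissible 𝔽[[Y]]-module). If moreover Y·Σ̃ = Σ̃ ∪ {0}, then the dual M^∨ is a free 𝔽[[Y]]-module of rank equal to the cardinality of Σ ∩ M[Y], which equals dim_𝔽 M[Y]. (Paper: Lemma 'lem:gen:Sigma' in §3.2.4.) -/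
/-!
Setup (Lemma `lem:gen:Sigma`, §3.2.4 of the paper): `𝔽[[Y]]` is `PowerSeries 𝔽` with
variable `Y = PowerSeries.X`; `M` is an `𝔽[[Y]]`-module (with its underlying `𝔽`-vector
space structure recorded by `[Module 𝔽 M]` and `[IsScalarTower 𝔽 (PowerSeries 𝔽) M]`);
`M[Y] = {m : M | Y • m = 0}`; for a set `S` of nonzero elements,
`S̃ = {c • v : c ∈ 𝔽ˣ, v ∈ S}`; the dual `M^∨ = Hom_𝔽(M, 𝔽)` carries the `𝔽[[Y]]`-action
`(a • g) m = g (a • m)`.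
-/

namespace BHHMS

variable (𝔽 : Type*) [Field 𝔽] (M : Type*) [AddCommGroup M] [Module 𝔽 M]
  [Module (PowerSeries 𝔽) M] [IsScalarTower 𝔽 (PowerSeries 𝔽) M]

/-- `M[Y] := {m : M | Y • m = 0}`, an `𝔽`-submodule of `M`. -/
def torsionSub : Submodule 𝔽 M where
  carrier := {m : M | (PowerSeries.X : PowerSeries 𝔽) • m = 0}
  add_mem' := by
    intro a b ha hb
    simp only [Set.mem_setOf_eq, smul_add] at *
    rw [ha, hb, add_zero]
  zero_mem' := by
    simp only [Set.mem_setOf_eq, smul_zero]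
  smul_mem' := by
    intro c m hm
    simp only [Set.mem_setOf_eq] at *
    rw [smul_comm, hm, smul_zero]

/-- `S̃ := {c • v : c ∈ 𝔽ˣ, v ∈ S}`. -/
def scaled (S : Set M) : Set M := {x | ∃ c : 𝔽, c ≠ 0 ∧ ∃ v ∈ S, x = c • v}

/-- The action of `a ∈ 𝔽[[Y]]` on the `𝔽`-linear dual of `M`: `(a • g) m = g (a • m)`. -/
noncomputable def dualSMul (a : PowerSeries 𝔽) (g : M →ₗ[𝔽] 𝔽) : M →ₗ[𝔽] 𝔽 where
  toFun m := g (a • m)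
  map_add' x y := by
    show g (a • (x + y)) = g (a • x) + g (a • y)
    rw [smul_add, map_add]
  map_smul' c x := by
    show g (a • c • x) = (RingHom.id 𝔽) c • g (a • x)
    rw [smul_comm, map_smul, RingHom.id_apply]

/-!
Write `f` for the action of `Y`, a locally nilpotent `𝔽`-linear endomorphism of `M`. By (i) and
(ii), `f` maps the elements of `S` outside `M[Y]` injectively, up to nonzero scalars, into `S`.
Hence the elements of `S` killed by `Y ^ (n + 1)` are linearly independent by induction on `n`:
those in `M[Y]` by (iii), the others because their images under `f` are, and the two parts span
subspaces that `f` keeps apart (the first lies in `ker f`, the second meets it trivially). The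
same splitting gives `span S ⊓ M[Y] = span (S ∩ M[Y])`.

If `Y • S̃ = S̃ ∪ {0}`, every `w ∈ S ∩ M[Y]` starts a chain `w = e₀, e₁, …` with `Y • eₖ₊₁ = eₖ`.
These chains form an `𝔽`-basis of `M`, and for the coordinate functional `e₀^*` of a chain,
`(a • e₀^*)(eₖ) = coeff k a`. Hence `a ↦ ∑ᵢ aᵢ • e₀ᵢ^*` is a bijection `𝔽[[Y]]ⁿ → M^∨`, where
`e₀ᵢ` runs through the `n` elements of `S ∩ M[Y]`.
-/

open Set Submodule PowerSeries

section LinearIndependence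

variable {K V ι : Type*} [Field K] [AddCommGroup V] [Module K V] (f : Module.End K V) {v : ι → V}

theorem disjoint_span_image_ker {t : Set ι} (ht : LinearIndepOn K (f ∘ v) t) :
    Disjoint (span K (v '' t)) (LinearMap.ker f) := by
  rw [image_eq_range]
  exact Submodule.range_ker_disjoint ht

theorem span_image_le_ker {s : Set ι} (hsf : ∀ i ∈ s, f (v i) = 0) :
    span K (v '' s) ≤ LinearMap.ker f :=
  span_le.2 <| by rintro _ ⟨i, hi, rfl⟩; exact hsf i hi

theorem linearIndepOn_union_of_map_eq_zero {s t : Set ι} (hs : LinearIndepOn K v s)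
    (hsf : ∀ i ∈ s, f (v i) = 0) (ht : LinearIndepOn K (f ∘ v) t) :
    LinearIndepOn K v (s ∪ t) :=
  hs.union (ht.of_comp f) <|
    (disjoint_span_image_ker f ht).symm.mono_left (span_image_le_ker f hsf)

theorem span_image_union_inf_ker {s t : Set ι} (hsf : ∀ i ∈ s, f (v i) = 0)
    (ht : LinearIndepOn K (f ∘ v) t) :
    span K (v '' (s ∪ t)) ⊓ LinearMap.ker f = span K (v '' s) := by
  rw [image_union, span_union, sup_inf_assoc_of_le _ (span_image_le_ker f hsf),
    (disjoint_span_image_ker f ht).eq_bot, sup_bot_eq]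

theorem linearIndepOn_comp_of_eq_smul {σ : ι → ι} {c : ι → K} {t u : Set ι}
    (hc : ∀ i ∈ t, c i ≠ 0 ∧ f (v i) = c i • v (σ i)) (hmaps : MapsTo σ t u)
    (hinj : InjOn σ t) (hu : LinearIndepOn K v u) : LinearIndepOn K (f ∘ v) t := by
  have h := ((hu.mono hmaps.image_subset).comp_of_image hinj).units_smul
    fun i : t => Units.mk0 (c i) (hc i i.2).1
  show LinearIndependent K _
  convert h using 1
  funext ⟨i, hi⟩
  simp [(hc i hi).2]

variable {s : Set ι} {σ : ι → ι} {c : ι → K}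

theorem linearIndepOn_of_map_eq_smul (hnil : ∀ i ∈ s, ∃ n, (f ^ n) (v i) = 0)
    (hker : LinearIndepOn K v {i ∈ s | f (v i) = 0})
    (hσ : ∀ i ∈ s, f (v i) ≠ 0 → σ i ∈ s ∧ c i ≠ 0 ∧ f (v i) = c i • v (σ i))
    (hinj : InjOn σ {i ∈ s | f (v i) ≠ 0}) : LinearIndepOn K v s := by
  have hlevel : ∀ n, LinearIndepOn K v {i ∈ s | (f ^ n) (v i) = 0} := by
    intro n
    induction n with
    | zero => exact hker.mono fun i ⟨hi, h0⟩ => ⟨hi, by simp_all⟩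
    | succ n ih =>
      have hsplit : {i ∈ s | (f ^ (n + 1)) (v i) = 0} ⊆
          {i ∈ s | f (v i) = 0} ∪ {i ∈ s | (f ^ (n + 1)) (v i) = 0 ∧ f (v i) ≠ 0} := by
        rintro i ⟨hi, hn⟩
        by_cases hf : f (v i) = 0
        exacts [Or.inl ⟨hi, hf⟩, Or.inr ⟨hi, hn, hf⟩]
      refine (linearIndepOn_union_of_map_eq_zero f hker (fun i hi => hi.2) ?_).mono hsplit
      refine linearIndepOn_comp_of_eq_smul f (fun i hi => (hσ i hi.1 hi.2.2).2) ?_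
        (hinj.mono ?_) ih
      · rintro i ⟨hi, hn, hf⟩
        obtain ⟨hσi, hci, hfi⟩ := hσ i hi hf
        rw [pow_succ, Module.End.mul_apply, hfi, map_smul, smul_eq_zero] at hn
        exact ⟨hσi, hn.resolve_left hci⟩
      · exact fun i hi => ⟨hi.1, hi.2.2⟩
  have hmono : Monotone fun n => {i ∈ s | (f ^ n) (v i) = 0} := by
    rintro m n hmn i ⟨hi, hm⟩
    obtain ⟨d, rfl⟩ := Nat.exists_eq_add_of_le hmn
    exact ⟨hi, by rw [add_comm, pow_add, Module.End.mul_apply, hm, map_zero]⟩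
  refine (linearIndepOn_iUnion_of_directed hmono.directed_le hlevel).mono fun i hi => ?_
  obtain ⟨n, hn⟩ := hnil i hi
  exact mem_iUnion.2 ⟨n, hi, hn⟩

theorem span_image_setOf_map_eq_zero (hind : LinearIndepOn K v s)
    (hσ : ∀ i ∈ s, f (v i) ≠ 0 → σ i ∈ s ∧ c i ≠ 0 ∧ f (v i) = c i • v (σ i))
    (hinj : InjOn σ {i ∈ s | f (v i) ≠ 0}) :
    span K (v '' {i ∈ s | f (v i) = 0}) = span K (v '' s) ⊓ LinearMap.ker f := by
  have hs : s = {i ∈ s | f (v i) = 0} ∪ {i ∈ s | f (v i) ≠ 0} := by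
    ext i
    by_cases hf : f (v i) = 0 <;> simp [hf]
  conv_rhs => rw [hs]
  refine (span_image_union_inf_ker f (fun i hi => hi.2) ?_).symm
  exact linearIndepOn_comp_of_eq_smul f (fun i hi => (hσ i hi.1 hi.2).2)
    (fun i hi => (hσ i hi.1 hi.2).1) hinj hind

theorem exists_map_eq_smul_injOn {S : Set V}
    (h1 : ∀ x ∈ S, f x ≠ 0 → ∃ a : K, a ≠ 0 ∧ ∃ y ∈ S, f x = a • y)
    (h2 : ∀ x₁ ∈ S, ∀ x₂ ∈ S, f x₁ ≠ 0 → K ∙ f x₁ = K ∙ f x₂ → x₁ = x₂) :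
    ∃ (σ : V → V) (c : V → K), (∀ x ∈ S, f x ≠ 0 → σ x ∈ S ∧ c x ≠ 0 ∧ f x = c x • σ x) ∧
      InjOn σ {x ∈ S | f x ≠ 0} := by
  choose! c hc σ hσS hfσ using h1
  have hσ : ∀ x ∈ S, f x ≠ 0 → σ x ∈ S ∧ c x ≠ 0 ∧ f x = c x • σ x :=
    fun x hx hf => ⟨hσS x hx hf, hc x hx hf, hfσ x hx hf⟩
  refine ⟨σ, c, hσ, ?_⟩
  rintro x₁ ⟨h₁, hf₁⟩ x₂ ⟨h₂, hf₂⟩ hσeq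
  refine h2 x₁ h₁ x₂ h₂ hf₁ ?_
  rw [(hσ x₁ h₁ hf₁).2.2, (hσ x₂ h₂ hf₂).2.2, span_singleton_smul_eq (hσ x₁ h₁ hf₁).2.1.isUnit,
    span_singleton_smul_eq (hσ x₂ h₂ hf₂).2.1.isUnit, hσeq]

end LinearIndependence

section Chains

theorem exists_chain {α : Type*} {g : α → α} {P : Set α} (hP : P ⊆ g '' P) {x : α}
    (hx : x ∈ P) : ∃ e : ℕ → α, e 0 = x ∧ ∀ k, g (e (k + 1)) = e k := by
  choose! h hhP hh using fun y (hy : y ∈ P) => hP hy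
  have hmem : ∀ k, h^[k] x ∈ P := fun k => (MapsTo.iterate hhP k) hx
  exact ⟨fun k => h^[k] x, rfl, fun k => by
    show g (h^[k + 1] x) = _
    rw [Function.iterate_succ_apply', hh _ (hmem k)]⟩

variable {K V ι : Type*} [Field K] [AddCommGroup V] [Module K V] (f : Module.End K V)
  {e : ι → ℕ → V}

theorem linearIndependent_of_chain (he : LinearIndependent K (e · 0))
    (he0 : ∀ i, f (e i 0) = 0) (hes : ∀ i k, f (e i (k + 1)) = e i k) :
    LinearIndependent K (fun p : ι × ℕ => e p.1 p.2) := by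
  have hne : ∀ i k, e i k ≠ 0 := by
    intro i k
    induction k with
    | zero => exact he.ne_zero i
    | succ k ih => exact fun h => ih (by rw [← hes, h, map_zero])
  have hnil : ∀ i k, (f ^ (k + 1)) (e i k) = 0 := by
    intro i k
    induction k with
    | zero => simpa using he0 i
    | succ k ih => rw [pow_succ, Module.End.mul_apply, hes, ih]
  have hker : {p : ι × ℕ | p ∈ univ ∧ f (e p.1 p.2) = 0} ⊆ (fun i => (i, 0)) '' univ := by
    rintro ⟨i, _ | k⟩ ⟨-, h⟩
    · exact ⟨i, trivial, rfl⟩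
    · exact absurd (hes i k ▸ h) (hne i k)
  rw [← linearIndepOn_univ_iff]
  refine linearIndepOn_of_map_eq_smul f (σ := fun p => (p.1, p.2 - 1)) (c := 1)
    (fun p _ => ⟨p.2 + 1, hnil p.1 p.2⟩)
    ((LinearIndepOn.image_of_comp _ _ (linearIndepOn_univ_iff.2 he)).mono hker) ?_ ?_
  · rintro ⟨i, _ | k⟩ - h
    · exact absurd (he0 i) h
    · exact ⟨trivial, one_ne_zero, by simp [hes]⟩
  · rintro ⟨i, _ | k⟩ ⟨-, h⟩ ⟨j, _ | l⟩ ⟨-, h'⟩ hij <;> simp_all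

theorem span_range_chain_eq_top (hnil : ∀ m, ∃ n, (f ^ n) m = 0)
    (hker : LinearMap.ker f ≤ span K (range (e · 0))) (hes : ∀ i k, f (e i (k + 1)) = e i k) :
    span K (range fun p : ι × ℕ => e p.1 p.2) = ⊤ := by
  set T := span K (range fun p : ι × ℕ => e p.1 p.2)
  have hT : T ≤ map f T := span_le.2 <| by
    rintro _ ⟨⟨i, k⟩, rfl⟩
    exact ⟨e i (k + 1), subset_span ⟨(i, k + 1), rfl⟩, hes i k⟩
  have hcomap : comap f T ≤ T :=
    calc comap f T ≤ comap f (map f T) := comap_mono hT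
      _ = T ⊔ LinearMap.ker f := comap_map_eq f T
      _ ≤ T := sup_le le_rfl <| hker.trans <| span_mono <| by
          rintro _ ⟨i, rfl⟩
          exact ⟨(i, 0), rfl⟩
  have hlevel : ∀ n m, (f ^ n) m = 0 → m ∈ T := by
    intro n
    induction n with
    | zero => intro m hm; simp_all
    | succ n ih =>
      intro m hm
      rw [pow_succ, Module.End.mul_apply] at hm
      exact hcomap (ih _ hm)
  exact eq_top_iff.2 fun m _ => (hnil m).elim fun n => hlevel n m

theorem exists_basis_chain (hnil : ∀ m, ∃ n, (f ^ n) m = 0) {P : Set V} (hP : P ⊆ f '' P)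
    {w : ι → V} (hw : LinearIndependent K w) (hwP : ∀ i, w i ∈ P)
    (hwker : span K (range w) = LinearMap.ker f) :
    ∃ b : Module.Basis (ι × ℕ) K V,
      (∀ i, f (b (i, 0)) = 0) ∧ ∀ i k, f (b (i, k + 1)) = b (i, k) := by
  choose e he0 hes using fun i => exists_chain hP (hwP i)
  have he : (e · 0) = w := funext he0
  have hfw : ∀ i, f (e i 0) = 0 := fun i => by
    rw [he0, ← LinearMap.mem_ker, ← hwker]
    exact subset_span (mem_range_self i)
  refine ⟨Module.Basis.mk (linearIndependent_of_chain f (he ▸ hw) hfw hes)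
    (span_range_chain_eq_top f hnil (by rw [he, hwker]) hes).ge, fun i => ?_, fun i k => ?_⟩
  · rw [Module.Basis.mk_apply]
    exact hfw i
  · rw [Module.Basis.mk_apply, Module.Basis.mk_apply]
    exact hes i k

end Chains

section Dual

variable {𝔽 M} {ι : Type*}

theorem dualSMul_apply (a : 𝔽⟦X⟧) (g : M →ₗ[𝔽] 𝔽) (m : M) : dualSMul 𝔽 M a g m = g (a • m) :=
  rfl

theorem smul_eq_shift_smul_X_smul_add (a : 𝔽⟦X⟧) (m : M) :
    a • m = (mk fun p => coeff (p + 1) a) • (X : 𝔽⟦X⟧) • m + constantCoeff a • m := by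
  conv_lhs => rw [eq_X_mul_shift_add_const a]
  rw [add_smul, mul_comm, mul_smul, ← algebraMap_eq, algebraMap_smul]

theorem coord_smul_chain [DecidableEq ι] (b : Module.Basis (ι × ℕ) 𝔽 M)
    (hb0 : ∀ j, (X : 𝔽⟦X⟧) • b (j, 0) = 0) (hbs : ∀ j k, (X : 𝔽⟦X⟧) • b (j, k + 1) = b (j, k))
    (i j : ι) (k : ℕ) (a : 𝔽⟦X⟧) :
    b.coord (i, 0) (a • b (j, k)) = if i = j then coeff k a else 0 := by
  induction k generalizing a with
  | zero =>
    rw [smul_eq_shift_smul_X_smul_add, hb0]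
    simp [Finsupp.single_apply, eq_comm]
  | succ k ih =>
    rw [smul_eq_shift_smul_X_smul_add, hbs, map_add, ih]
    simp

theorem sum_dualSMul_coord_apply [Fintype ι] (b : Module.Basis (ι × ℕ) 𝔽 M)
    (hb0 : ∀ j, (X : 𝔽⟦X⟧) • b (j, 0) = 0) (hbs : ∀ j k, (X : 𝔽⟦X⟧) • b (j, k + 1) = b (j, k))
    (c : ι → 𝔽⟦X⟧) (j : ι) (k : ℕ) :
    (∑ i, dualSMul 𝔽 M (c i) (b.coord (i, 0))) (b (j, k)) = coeff k (c j) := by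
  classical
  simp [dualSMul_apply, coord_smul_chain b hb0 hbs]

theorem bijective_sum_dualSMul_coord [Fintype ι] (b : Module.Basis (ι × ℕ) 𝔽 M)
    (hb0 : ∀ j, (X : 𝔽⟦X⟧) • b (j, 0) = 0) (hbs : ∀ j k, (X : 𝔽⟦X⟧) • b (j, k + 1) = b (j, k)) :
    Function.Bijective fun c : ι → 𝔽⟦X⟧ => ∑ i, dualSMul 𝔽 M (c i) (b.coord (i, 0)) := by
  refine ⟨fun c c' h => funext fun j => ext fun k => ?_,
    fun g => ⟨fun j => mk fun k => g (b (j, k)), b.ext fun p => ?_⟩⟩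
  · simpa [sum_dualSMul_coord_apply b hb0 hbs] using LinearMap.congr_fun h (b (j, k))
  · simp [sum_dualSMul_coord_apply b hb0 hbs]

end Dual

theorem statement11
    (htors : ∀ m : M, ∃ k : ℕ, ((PowerSeries.X : PowerSeries 𝔽) ^ k) • m = 0)
    (S : Set M) (hspan : Submodule.span 𝔽 S = ⊤)
    (h1 : ∀ v ∈ S, (PowerSeries.X : PowerSeries 𝔽) • v ∈ scaled 𝔽 M S ∪ {0})
    (h2 : ∀ v₁ ∈ S, ∀ v₂ ∈ S, (PowerSeries.X : PowerSeries 𝔽) • v₁ ≠ 0 →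
      Submodule.span 𝔽 {(PowerSeries.X : PowerSeries 𝔽) • v₁}
        = Submodule.span 𝔽 {(PowerSeries.X : PowerSeries 𝔽) • v₂} → v₁ = v₂)
    (h3fin : (S ∩ (torsionSub 𝔽 M : Set M)).Finite)
    (h3ind : LinearIndependent 𝔽 (fun v : ↥(S ∩ (torsionSub 𝔽 M : Set M)) => (v : M))) :
    LinearIndependent 𝔽 (fun v : ↥S => (v : M)) ∧
    Submodule.span 𝔽 (S ∩ (torsionSub 𝔽 M : Set M)) = torsionSub 𝔽 M ∧
    FiniteDimensional 𝔽 ↥(torsionSub 𝔽 M) ∧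
    ((fun v : M => (PowerSeries.X : PowerSeries 𝔽) • v) '' scaled 𝔽 M S
        = scaled 𝔽 M S ∪ {0} →
      Nat.card ↥(S ∩ (torsionSub 𝔽 M : Set M)) = Module.finrank 𝔽 ↥(torsionSub 𝔽 M) ∧
      ∃ b : Fin (Nat.card ↥(S ∩ (torsionSub 𝔽 M : Set M))) → (M →ₗ[𝔽] 𝔽),
        Function.Bijective
          (fun c : Fin (Nat.card ↥(S ∩ (torsionSub 𝔽 M : Set M))) → PowerSeries 𝔽 =>
            ∑ i, dualSMul 𝔽 M (c i) (b i))) := by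
  set f := Module.toModuleEnd 𝔽 M (X : 𝔽⟦X⟧)
  have hnil : ∀ m, ∃ n, (f ^ n) m = 0 :=
    fun m => (htors m).imp fun n hn => by rwa [← map_pow]
  obtain ⟨σ, c, hσ, hinj⟩ :=
    exists_map_eq_smul_injOn f (fun v hv hf => (h1 v hv).resolve_right hf) h2
  have hind : LinearIndepOn 𝔽 id S :=
    linearIndepOn_of_map_eq_smul f (fun m _ => hnil m) h3ind hσ hinj
  have hspanKer : span 𝔽 (S ∩ torsionSub 𝔽 M) = torsionSub 𝔽 M := by
    have h := span_image_setOf_map_eq_zero f hind hσ hinj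
    rwa [image_id, image_id, hspan, top_inf_eq] at h
  refine ⟨hind, hspanKer, hspanKer ▸ FiniteDimensional.span_of_finite 𝔽 h3fin, fun himg => ?_⟩
  have := h3fin.to_subtype
  set eqv := (Finite.equivFin ↥(S ∩ (torsionSub 𝔽 M : Set M))).symm
  set w : Fin (Nat.card ↥(S ∩ (torsionSub 𝔽 M : Set M))) → M := fun j => eqv j
  have hw : LinearIndependent 𝔽 w := h3ind.comp _ eqv.injective
  have hrange : range w = S ∩ torsionSub 𝔽 M :=
    (eqv.surjective.range_comp _).trans Subtype.range_coe
  obtain ⟨b, hb0, hbs⟩ := exists_basis_chain f hnil (P := scaled 𝔽 M S)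
    (himg ▸ subset_union_left) hw
    (fun j => ⟨1, one_ne_zero, w j, (eqv j).2.1, (one_smul _ _).symm⟩)
    (by rw [hrange, hspanKer]; rfl)
  refine ⟨?_, fun j => b.coord (j, 0), bijective_sum_dualSMul_coord b hb0 hbs⟩
  have h := finrank_span_eq_card hw
  rw [hrange, hspanKer, Fintype.card_fin] at h
  exact h.symm

end BHHMS
end

section
/- Let p > 2 be a prime and F a finite field of characteristic p. Then for every a ∈ 𝔽_p one has Σ_{λ ∈ F, Tr_{F/𝔽_p}(λ) = a} λ⁻¹ = a⁻¹ in F (reading a and a⁻¹ in F via 𝔽_p ⊆ F, and with the convention 0⁻¹ = 0). In particular, for a ≠ 0 the sum of the inverses of the elements of trace a equals a⁻¹, and the sum of the inverses of the nonzero elements of trace 0 vanishes. (Paper: the key computation in the proof of Lemma 'lem:ker' in §3.2.2, via the identity Σ_{λ∈F^×} λ⁻¹[Tr(λ)] = Σ_{a∈𝔽_p^×} a⁻¹[a].) -/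
/-!
Write `G(a) = ∑_{Tr x = a} x⁻¹`. Since the trace is `𝔽_p`-linear, multiplication by `c ∈ 𝔽_pˣ`
maps the fibre over `a` onto the fibre over `c a`, so `G(c a) = c⁻¹ G(a)`; taking `c = -1`
gives `G(0) = 0` when `p > 2`, and it remains to show `G(1) = 1`. Expanding the trace as the sum
of the Galois conjugates, `∑_x x⁻¹ Tr(x) = ∑_σ ∑_{x ≠ 0} x⁻¹ σ(x)`, where every `σ ≠ 1` gives a
nontrivial character of `Fˣ` and contributes `0`, so the whole sum is `|Fˣ| = -1`. Grouping the
same sum by the value of the trace gives `∑_{t ≠ 0} t G(t) = (p - 1) G(1) = -G(1)`.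
-/

open Finset

theorem sum_units_eq_sum_of_map_zero {G₀ M : Type*} [GroupWithZero G₀] [Fintype G₀]
    [DecidableEq G₀] [AddCommMonoid M] {f : G₀ → M} (hf : f 0 = 0) :
    ∑ x : G₀ˣ, f x = ∑ x : G₀, f x := by
  refine (sum_map univ ⟨_, Units.val_injective⟩ f).symm.trans ?_
  refine sum_subset (subset_univ _) fun x _ hx => ?_
  obtain rfl : x = 0 := by
    by_contra h
    exact hx (mem_map_of_mem _ (mem_univ (Units.mk0 x h)))
  exact hf

theorem sum_units_inv_mul_algEquiv_eq_zero {K F : Type*} [Field K] [Field F] [Fintype F]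
    [DecidableEq F] [Algebra K F] {σ : F ≃ₐ[K] F} (hσ : σ ≠ 1) :
    ∑ x : Fˣ, (x : F)⁻¹ * σ x = 0 := by
  let χ : Fˣ →* F :=
    { toFun := fun x => (x : F)⁻¹ * σ x
      map_one' := by simp
      map_mul' := fun x y => by simp only [Units.val_mul, mul_inv, map_mul]; ring }
  refine sum_hom_units_eq_zero χ fun hχ => hσ <| AlgEquiv.ext fun x => ?_
  obtain rfl | hx := eq_or_ne x 0
  · simp
  · have : x⁻¹ * σ x = 1 := DFunLike.congr_fun hχ (Units.mk0 x hx)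
    simpa [inv_mul_eq_one₀ hx, eq_comm] using this

theorem sum_inv_mul_algebraMap_trace {K F : Type*} [Field K] [Field F] [Fintype F] [Algebra K F] :
    ∑ x : F, x⁻¹ * algebraMap K F (Algebra.trace K F x) = -1 := by
  classical
  have : FiniteDimensional K F := Module.Finite.of_finite
  calc ∑ x : F, x⁻¹ * algebraMap K F (Algebra.trace K F x)
      = ∑ σ : Gal(F/K), ∑ x : Fˣ, (x : F)⁻¹ * σ x := by
        simp_rw [trace_eq_sum_automorphisms, mul_sum]
        rw [sum_comm]
        refine sum_congr rfl fun σ _ => (sum_units_eq_sum_of_map_zero (by simp)).symm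
    _ = ∑ x : Fˣ, (x : F)⁻¹ * x := by
        rw [sum_eq_single 1 (fun σ _ hσ => sum_units_inv_mul_algEquiv_eq_zero hσ) (by simp)]
        rfl
    _ = -1 := by
        simp [Fintype.card_units, Nat.cast_sub Fintype.card_pos]

section TraceFiber

variable (K F : Type*) [Field K] [DecidableEq K] [Field F] [Fintype F] [Algebra K F]

noncomputable def traceFiberInvSum (a : K) : F :=
  ∑ x ∈ univ.filter (fun x : F => Algebra.trace K F x = a), x⁻¹

variable {K F}

theorem traceFiberInvSum_mul {c : K} (hc : c ≠ 0) (a : K) :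
    traceFiberInvSum K F (c * a) = (algebraMap K F c)⁻¹ * traceFiberInvSum K F a := by
  have hcF : algebraMap K F c ≠ 0 := (map_ne_zero _).2 hc
  have htrace (k : K) (x : F) :
      Algebra.trace K F (algebraMap K F k * x) = k * Algebra.trace K F x := by
    rw [← Algebra.smul_def, map_smul, smul_eq_mul]
  rw [traceFiberInvSum, traceFiberInvSum, mul_sum]
  refine sum_nbij' ((algebraMap K F c)⁻¹ * ·) (algebraMap K F c * ·) ?_ ?_ ?_ ?_
    fun x _ => by field_simp
  · intro x hx
    simp only [mem_filter, mem_univ, true_and] at hx ⊢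
    rw [← map_inv₀, htrace, hx, inv_mul_cancel_left₀ hc]
  all_goals simp [htrace, hc, hcF]

theorem traceFiberInvSum_zero {c : K} (hc₀ : c ≠ 0) (hc₁ : c ≠ 1) :
    traceFiberInvSum K F 0 = 0 := by
  have h := traceFiberInvSum_mul (F := F) hc₀ 0
  rw [mul_zero] at h
  have : (1 - (algebraMap K F c)⁻¹) * traceFiberInvSum K F 0 = 0 := by
    rw [sub_mul, one_mul, ← h, sub_self]
  exact (mul_eq_zero.1 this).resolve_left <| sub_ne_zero.2 <| Ne.symm <|
    inv_ne_one.2 <| (map_ne_one_iff _ (algebraMap K F).injective).2 hc₁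

theorem traceFiberInvSum_one [Fintype K] : traceFiberInvSum K F 1 = 1 := by
  have hfiber (t : K) : algebraMap K F t * traceFiberInvSum K F t
      = traceFiberInvSum K F 1 - if t = 0 then traceFiberInvSum K F 1 else 0 := by
    obtain rfl | ht := eq_or_ne t 0
    · simp
    · have hmul := traceFiberInvSum_mul (F := F) ht 1
      rw [mul_one] at hmul
      rw [hmul, if_neg ht, sub_zero, mul_inv_cancel_left₀ ((map_ne_zero _).2 ht)]
  have hsum : ∑ t : K, algebraMap K F t * traceFiberInvSum K F t = -1 := by
    rw [← sum_inv_mul_algebraMap_trace (K := K), ← sum_fiberwise univ (Algebra.trace K F)]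
    refine sum_congr rfl fun t _ => ?_
    rw [traceFiberInvSum, mul_sum]
    refine sum_congr rfl fun x hx => ?_
    rw [(mem_filter.1 hx).2, mul_comm]
  have hq : (Fintype.card K : F) = 0 := by
    rw [← map_natCast (algebraMap K F), FiniteField.cast_card_eq_zero, map_zero]
  simpa [hfiber, sum_sub_distrib, hq] using hsum

end TraceFiber

/-- For every `a ∈ 𝔽_p`,
`Σ_{λ ∈ F, Tr(λ) = a} λ⁻¹ = a⁻¹` in `F`; in particular the sum of the inverses of the
nonzero elements of trace `0` vanishes. -/
theorem statement12 (p : ℕ) [Fact p.Prime] (hp : 2 < p)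
    (F : Type*) [Field F] [Fintype F] [DecidableEq F] [Algebra (ZMod p) F] (a : ZMod p) :
    (∑ x ∈ Finset.univ.filter (fun x : F => Algebra.trace (ZMod p) F x = a), x⁻¹
        = (algebraMap (ZMod p) F a)⁻¹) ∧
    (∑ x ∈ Finset.univ.filter
        (fun x : F => Algebra.trace (ZMod p) F x = 0 ∧ x ≠ 0), x⁻¹ = 0) := by
  have : Fact (2 < p) := ⟨hp⟩
  have hzero : traceFiberInvSum (ZMod p) F 0 = 0 :=
    traceFiberInvSum_zero (neg_ne_zero.2 one_ne_zero) ZMod.neg_one_ne_one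
  refine ⟨?_, ?_⟩
  · obtain rfl | ha := eq_or_ne a 0
    · rw [map_zero, inv_zero]
      exact hzero
    · have h := traceFiberInvSum_mul (F := F) ha 1
      rwa [mul_one, traceFiberInvSum_one, mul_one] at h
  · rw [← filter_filter, sum_filter_of_ne fun x _ => (inv_eq_zero.not).mp]
    exact hzero
end

section
/- The 𝔽-algebra homomorphism from the polynomial ring 𝔽[T_0,…,T_{f−1}] to the group algebra 𝔽[K] sending T_j to Y_j is surjective with kernel the ideal (T_0^p,…,T_{f−1}^p); i.e. it induces an isomorphism of 𝔽-algebras 𝔽[T_0,…,T_{f−1}]/(T_0^p,…,T_{f−1}^p) ≅ 𝔽[K]. (Paper: Lemma 'lem:basic'(i) in §3.2.2, identifying 𝔽[N_0/N_0^p] with 𝔽[K].) -/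
/-!
Setup (§3.2.2 of the paper): `p > 2` is prime, `q = p^f`, `K` is a finite field with `q`
elements, `𝔽` a field with a ring embedding `σ₀ : K → 𝔽`, and `σ_j(a) = σ₀(a)^{p^j}`.
`𝔽[K]` is the group algebra over `𝔽` of the additive group of `K`
(`AddMonoidAlgebra 𝔽 K`), with canonical basis `[a] = AddMonoidAlgebra.single a 1`, and
`Y_j = Σ_{a ∈ K^×} σ_j(a)^{−1} [a]`.
-/

namespace BHHMS

/-- `Y_j = Σ_{a ∈ K^×} σ_j(a)^{−1} [a] ∈ 𝔽[K]`, where `σ_j(a) = σ₀(a)^{p^j}`. -/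
noncomputable def Yelt (p : ℕ) {K 𝔽 : Type*} [Field K] [Fintype K] [DecidableEq K] [Field 𝔽]
    (σ₀ : K →+* 𝔽) (j : ℕ) : AddMonoidAlgebra 𝔽 K :=
  ∑ a : Kˣ, AddMonoidAlgebra.single ((a : K) : K) ((σ₀ (a : K) ^ p ^ j)⁻¹)

/-!
Write `λ_m(x) = Σ_a x(a) σ₀(a)^m` for `x ∈ 𝔽[K]` (`moment`). Since `σ₀` is additive, these
linear forms obey the Leibniz rule `λ_m(xy) = Σ_k C(m,k) λ_k(x) λ_{m-k}(y)`. A character sum over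
`K^×` gives `λ_k(Y_j) = -1` if `k ≡ p^j mod q - 1` and `0` otherwise, so for `m < q` we get
`λ_m(Y_j z) = -C(m, p^j) λ_{m-p^j}(z)`, and by Lucas `C(m, p^j)` is the `j`-th base-`p` digit
of `m`. Consequently, for exponent vectors `e, e'` with entries `< p`, the form
`λ_{Σ e'_j p^j}` is nonzero on `∏ Y_j^{e_j}` exactly when `e = e'`. So the `p^f` reduced
monomials in the `Y_j` are linearly independent, hence a basis of `𝔽[K]`: the map is surjective
and injective on reduced polynomials. As `Y_j^p = 0`, every polynomial is reduced modulo
`(T_j^p)`, which identifies the kernel.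
-/

open Finset MvPolynomial

section Moment

variable {R M : Type*} [CommSemiring R] [AddCommMonoid M]

noncomputable def moment (χ : M →+ R) (m : ℕ) : AddMonoidAlgebra R M →ₗ[R] R :=
  Finsupp.linearCombination R (fun a => χ a ^ m) ∘ₗ
    (AddMonoidAlgebra.coeffLinearEquiv R).toLinearMap

theorem moment_single (χ : M →+ R) (m : ℕ) (a : M) (c : R) :
    moment χ m (AddMonoidAlgebra.single a c) = c * χ a ^ m := by
  simp [moment, AddMonoidAlgebra.coeff_single]

theorem moment_one (χ : M →+ R) (m : ℕ) : moment χ m 1 = 0 ^ m := by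
  rw [AddMonoidAlgebra.one_def, moment_single, map_zero, one_mul]

theorem moment_mul (χ : M →+ R) (m : ℕ) (x y : AddMonoidAlgebra R M) :
    moment χ m (x * y) =
      ∑ k ∈ range (m + 1), m.choose k * (moment χ k x * moment χ (m - k) y) := by
  induction x using AddMonoidAlgebra.induction_linear with
  | zero => simp
  | add x x' hx hx' => simp only [add_mul, map_add, hx, hx', mul_add, sum_add_distrib]
  | single a c =>
    induction y using AddMonoidAlgebra.induction_linear with
    | zero => simp
    | add y y' hy hy' => simp only [mul_add, map_add, hy, hy', sum_add_distrib]
    | single b d =>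
      simp only [AddMonoidAlgebra.single_mul_single, moment_single, map_add, add_pow, mul_sum]
      exact sum_congr rfl fun k _ => by ring

end Moment

section Digits

theorem sum_fin_succ_mul_pow (p : ℕ) {f : ℕ} (d : Fin (f + 1) → ℕ) :
    ∑ i, d i * p ^ (i : ℕ) = d 0 + p * ∑ i : Fin f, d i.succ * p ^ (i : ℕ) := by
  rw [Fin.sum_univ_succ, mul_sum]
  simp only [Fin.val_zero, pow_zero, mul_one, Fin.val_succ, pow_succ]
  exact congrArg _ (sum_congr rfl fun _ _ => by ring)

theorem sum_mul_pow_lt {p : ℕ} : ∀ {f : ℕ} (d : Fin f → ℕ), (∀ i, d i < p) →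
    ∑ i, d i * p ^ (i : ℕ) < p ^ f
  | 0, _, _ => by simp
  | f + 1, d, hd => by
    have ih := sum_mul_pow_lt (fun i : Fin f => d i.succ) fun i => hd _
    have := hd 0
    rw [sum_fin_succ_mul_pow, pow_succ]
    nlinarith

theorem sum_mul_pow_div_pow_mod {p : ℕ} : ∀ {f : ℕ} (d : Fin f → ℕ), (∀ i, d i < p) →
    ∀ j : Fin f, (∑ i, d i * p ^ (i : ℕ)) / p ^ (j : ℕ) % p = d j
  | f + 1, d, hd, j => by
    have hp : 0 < p := (Nat.zero_le _).trans_lt (hd 0)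
    rw [sum_fin_succ_mul_pow]
    cases j using Fin.cases with
    | zero => simp [Nat.mod_eq_of_lt (hd 0)]
    | succ j =>
      rw [Fin.val_succ, pow_succ', ← Nat.div_div_eq_div_mul, Nat.add_mul_div_left _ _ hp,
        Nat.div_eq_of_lt (hd 0), zero_add]
      exact sum_mul_pow_div_pow_mod _ (fun i => hd _) j

theorem choose_pow_modEq_digit (p : ℕ) [Fact p.Prime] (j m : ℕ) :
    m.choose (p ^ j) ≡ m / p ^ j % p [MOD p] := by
  induction j generalizing m with
  | zero => simpa [Nat.choose_one_right] using (Nat.mod_modEq m p).symm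
  | succ j ih =>
    have hp : 0 < p := (Fact.out : p.Prime).pos
    calc m.choose (p ^ (j + 1))
        ≡ (m % p).choose (p ^ (j + 1) % p) * (m / p).choose (p ^ (j + 1) / p) [MOD p] :=
          Choose.choose_modEq_choose_mod_mul_choose_div_nat
      _ = (m / p).choose (p ^ j) := by
          rw [pow_succ, Nat.mul_mod_left, Nat.choose_zero_right, one_mul, Nat.mul_div_cancel _ hp]
      _ ≡ m / p / p ^ j % p [MOD p] := ih _
      _ = m / p ^ (j + 1) % p := by rw [Nat.div_div_eq_div_mul, mul_comm, ← pow_succ]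

theorem pow_add_one_lt_pow {p j f : ℕ} (hp : 2 < p) (hj : j < f) : p ^ j + 1 < p ^ f :=
  calc p ^ j + 1 < p ^ j * p := by nlinarith [Nat.one_le_pow j p (by omega)]
    _ = p ^ (j + 1) := (pow_succ p j).symm
    _ ≤ p ^ f := Nat.pow_le_pow_right (by omega) hj

theorem not_pow_sub_one_dvd_pow {p f : ℕ} (hp : p.Prime) (h2 : 2 < p ^ f) (i : ℕ) :
    ¬ (p ^ f - 1) ∣ p ^ i := by
  have hf : f ≠ 0 := by rintro rfl; simp at h2
  have hcop : Nat.Coprime (p ^ f - 1) p := Nat.coprime_comm.1 <| hp.coprime_iff_not_dvd.2 fun h =>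
    hp.one_lt.ne' <| Nat.dvd_one.1 <| by
      simpa [Nat.sub_sub_self (by omega : 1 ≤ p ^ f)] using Nat.dvd_sub (dvd_pow_self p hf) h
  exact fun h => by have := (hcop.pow_right i).eq_one_of_dvd h; omega

end Digits

section FiniteField

theorem sum_units_zpow {K : Type*} [Field K] [Fintype K] [DecidableEq K] (n : ℤ) :
    ∑ u : Kˣ, ((u ^ n : Kˣ) : K) = if ((Fintype.card K - 1 : ℕ) : ℤ) ∣ n then -1 else 0 := by
  have hq : 0 < Fintype.card K - 1 := by have := Fintype.one_lt_card (α := K); omega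
  have hr : 0 ≤ n % (Fintype.card K - 1 : ℕ) := Int.emod_nonneg _ (by omega)
  have hpow : ∀ u : Kˣ, u ^ n = u ^ (n % (Fintype.card K - 1 : ℕ)).toNat := by
    intro u
    rw [← zpow_natCast, Int.toNat_of_nonneg hr, ← Fintype.card_units, zpow_mod_card]
  simp only [hpow, Units.val_pow_eq_pow_val, FiniteField.sum_pow_units]
  congr 1
  rw [eq_iff_iff, ← Int.natCast_dvd_natCast, Int.toNat_of_nonneg hr, Int.dvd_iff_emod_eq_zero,
    Int.dvd_iff_emod_eq_zero, Int.emod_emod]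

theorem two_lt_pow_of_card_eq {p f : ℕ} {K : Type*} [Field K] [Fintype K] (hp : 2 < p)
    (hK : Fintype.card K = p ^ f) : 2 < p ^ f := by
  have hf : f ≠ 0 := by
    rintro rfl
    exact (Fintype.one_lt_card (α := K)).ne' (by simpa using hK)
  exact hp.trans_le (Nat.le_self_pow hf p)

theorem charP_of_card_eq {p f : ℕ} [Fact p.Prime] {K 𝔽 : Type*} [Field K] [Fintype K] [Field 𝔽]
    (hK : Fintype.card K = p ^ f) (σ₀ : K →+* 𝔽) : CharP 𝔽 p :=
  have : CharP K p := charP_of_card_eq_prime_pow hK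
  charP_of_injective_ringHom σ₀.injective p

end FiniteField

section ReducedMonomials

variable {σ R : Type*} [CommSemiring R]

theorem eq_zero_of_linearIndepOn_of_mem_restrictSupport {M : Type*} [AddCommMonoid M]
    [Module R M] {s : Set (σ →₀ ℕ)} {g : MvPolynomial σ R →ₗ[R] M}
    (hg : LinearIndepOn R (fun e => g (monomial e 1)) s) {x : MvPolynomial σ R}
    (hx : x ∈ restrictSupport R s) (hgx : g x = 0) : x = 0 := by
  set b := basisMonomials σ R
  have hrepr : b.repr x = 0 := by
    refine linearIndepOn_iffₛ.1 hg _ (show b.repr x ∈ Finsupp.supported R R s from hx) 0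
      (zero_mem _) ?_
    have hgb := Finsupp.apply_linearCombination R g b (b.repr x)
    rw [b.linearCombination_repr, coe_basisMonomials] at hgb
    rw [map_zero, ← hgx, hgb]
    rfl
  simpa using hrepr

variable [Fintype σ]

open Classical in
noncomputable def reducedExponents (σ : Type*) [Fintype σ] (p : ℕ) : Finset (σ →₀ ℕ) :=
  Iic (Finsupp.equivFunOnFinite.symm fun _ => p - 1)

theorem mem_reducedExponents {p : ℕ} (hp : 0 < p) {e : σ →₀ ℕ} :
    e ∈ reducedExponents σ p ↔ ∀ i, e i < p := by
  simp only [reducedExponents, mem_Iic, Finsupp.le_def, Finsupp.equivFunOnFinite_symm_apply_apply]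
  exact forall_congr' fun _ => by omega

theorem card_reducedExponents {p : ℕ} (hp : 0 < p) :
    #(reducedExponents σ p) = p ^ Fintype.card σ := by
  classical
  rw [reducedExponents, Finsupp.card_Iic]
  rcases eq_or_ne p 1 with rfl | hp1
  · simp
  · have : (Finsupp.equivFunOnFinite.symm fun _ : σ => p - 1).support = univ :=
      eq_univ_of_forall fun _ => Finsupp.mem_support_iff.2 (by simpa using (by omega : p - 1 ≠ 0))
    simp [this, Nat.sub_add_cancel hp]

theorem mem_span_X_pow_sup_restrictSupport (p : ℕ) (P : MvPolynomial σ R) :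
    P ∈ (Ideal.span (Set.range fun i : σ => (X i : MvPolynomial σ R) ^ p)).restrictScalars R ⊔
      restrictSupport R (reducedExponents σ p) := by
  rw [← P.support_sum_monomial_coeff]
  refine Submodule.sum_mem _ fun d _ => ?_
  by_cases hd : d ∈ reducedExponents σ p
  · exact Submodule.mem_sup_right ((monomial_mem_restrictSupport R).2 (Or.inl hd))
  · obtain ⟨i, hi⟩ : ∃ i, p ≤ d i := by
      simp only [reducedExponents, mem_Iic, Finsupp.le_def,
        Finsupp.equivFunOnFinite_symm_apply_apply, not_forall, not_le] at hd
      obtain ⟨i, hi⟩ := hd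
      exact ⟨i, by omega⟩
    have hfactor :
        monomial d (P.coeff d) = X i ^ p * monomial (d - Finsupp.single i p) (P.coeff d) := by
      rw [X_pow_eq_monomial, monomial_mul, one_mul,
        add_tsub_cancel_of_le (Finsupp.single_le_iff.mpr hi)]
    refine Submodule.mem_sup_left ?_
    rw [Submodule.restrictScalars_mem, hfactor]
    exact Ideal.mul_mem_right _ _ (Ideal.subset_span ⟨i, rfl⟩)

end ReducedMonomials

section Yelt

variable {p f : ℕ} {K 𝔽 : Type*} [Field K] [Fintype K] [DecidableEq K] [Field 𝔽]

theorem moment_Yelt (σ₀ : K →+* 𝔽) (j k : ℕ) :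
    moment (σ₀ : K →+ 𝔽) k (Yelt p σ₀ j) =
      if ((Fintype.card K - 1 : ℕ) : ℤ) ∣ ((k : ℤ) - (p : ℤ) ^ j) then -1 else 0 := by
  have hterm : ∀ u : Kˣ,
      (σ₀ u ^ p ^ j)⁻¹ * σ₀ u ^ k = σ₀ ((u ^ ((k : ℤ) - (p : ℤ) ^ j) : Kˣ) : K) := by
    intro u
    rw [Units.val_zpow_eq_zpow_val, map_zpow₀, zpow_sub₀ (by simp), zpow_natCast,
      ← Nat.cast_pow, zpow_natCast, div_eq_inv_mul]
  rw [Yelt, map_sum]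
  simp only [moment_single, AddMonoidHom.coe_coe]
  rw [sum_congr rfl fun u _ => hterm u, ← map_sum, sum_units_zpow, apply_ite σ₀, map_neg, map_one,
    map_zero]

theorem Yelt_pow_eq_zero [Fact p.Prime] (hp : 2 < p) (hK : Fintype.card K = p ^ f)
    (σ₀ : K →+* 𝔽) (j : ℕ) : Yelt p σ₀ j ^ p = 0 := by
  have : CharP K p := charP_of_card_eq_prime_pow hK
  have : CharP 𝔽 p := charP_of_card_eq hK σ₀
  have : CharP (AddMonoidAlgebra 𝔽 K) p := charP_of_injective_algebraMap' 𝔽 p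
  -- By Frobenius, `Y_j ^ p = λ_0(Y_{j+1}) [0]`.
  have hsum : ∑ u : Kˣ, (σ₀ u ^ p ^ (j + 1))⁻¹ = 0 := by
    have h := moment_Yelt σ₀ (p := p) (j + 1) 0
    simp only [Yelt, map_sum, moment_single, pow_zero, mul_one] at h
    rw [h, if_neg]
    rw [hK, Nat.cast_zero, zero_sub, dvd_neg, ← Nat.cast_pow, Int.natCast_dvd_natCast]
    exact not_pow_sub_one_dvd_pow Fact.out (two_lt_pow_of_card_eq hp hK) _
  simp only [Yelt, sum_pow_char, AddMonoidAlgebra.single_pow, nsmul_eq_mul, CharP.cast_eq_zero,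
    zero_mul, inv_pow, ← pow_mul, ← pow_succ]
  exact (map_sum (AddMonoidAlgebra.singleAddHom (0 : K)) _ _).symm.trans (by rw [hsum, map_zero])

theorem moment_Yelt_mul (hp : 2 < p) (hK : Fintype.card K = p ^ f) (σ₀ : K →+* 𝔽) {j : ℕ}
    (hj : j < f) {m : ℕ} (hm : m < p ^ f) (Z : AddMonoidAlgebra 𝔽 K) :
    moment (σ₀ : K →+ 𝔽) m (Yelt p σ₀ j * Z) =
      -(m.choose (p ^ j) : 𝔽) * moment (σ₀ : K →+ 𝔽) (m - p ^ j) Z := by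
  have hlt := pow_add_one_lt_pow hp hj
  have hpos : 0 < p ^ j := Nat.pow_pos (by omega)
  have hY : ∀ k ≤ m, k ≠ p ^ j → moment (σ₀ : K →+ 𝔽) k (Yelt p σ₀ j) = 0 := by
    intro k hk hne
    rw [moment_Yelt, if_neg]
    intro hdvd
    have habs : |(k : ℤ) - (p : ℤ) ^ j| < ((Fintype.card K - 1 : ℕ) : ℤ) := by
      rw [hK, abs_lt, ← Nat.cast_pow]
      constructor <;> omega
    exact hne (by exact_mod_cast sub_eq_zero.1 (Int.eq_zero_of_abs_lt_dvd hdvd habs))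
  rw [moment_mul, sum_eq_single (p ^ j)]
  · rw [moment_Yelt, if_pos (by simp)]
    ring
  · intro k hk hne
    rw [hY k (Nat.lt_succ_iff.1 (mem_range.1 hk)) hne, zero_mul, mul_zero]
  · intro hnot
    rw [Nat.choose_eq_zero_of_lt (by simpa [Nat.lt_succ_iff] using hnot)]
    simp

theorem moment_weight_Yelt_mul [Fact p.Prime] (hp : 2 < p) (hK : Fintype.card K = p ^ f)
    (σ₀ : K →+* 𝔽) {e : Fin f →₀ ℕ} (he : ∀ i, e i < p) (j : Fin f) (Z : AddMonoidAlgebra 𝔽 K) :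
    moment (σ₀ : K →+ 𝔽) (Finsupp.weight (fun i : Fin f => p ^ (i : ℕ)) e) (Yelt p σ₀ j * Z) =
      -(e j : 𝔽) *
        moment (σ₀ : K →+ 𝔽) (Finsupp.weight (fun i : Fin f => p ^ (i : ℕ)) e - p ^ (j : ℕ)) Z := by
  have := charP_of_card_eq hK σ₀
  have hsum : Finsupp.weight (fun i : Fin f => p ^ (i : ℕ)) e = ∑ i, e i * p ^ (i : ℕ) := by
    simp [Finsupp.weight_eq_sum]
  rw [moment_Yelt_mul hp hK σ₀ j.isLt (hsum ▸ sum_mul_pow_lt _ he),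
    CharP.natCast_eq_natCast' 𝔽 p ((choose_pow_modEq_digit p j _).trans (by
      rw [hsum, sum_mul_pow_div_pow_mod _ he]))]

theorem moment_aeval_monomial_ne_zero_iff [Fact p.Prime] (hp : 2 < p)
    (hK : Fintype.card K = p ^ f) (σ₀ : K →+* 𝔽) {e' : Fin f →₀ ℕ} (he' : ∀ i, e' i < p)
    (e : Fin f →₀ ℕ) :
    moment (σ₀ : K →+ 𝔽) (Finsupp.weight (fun i : Fin f => p ^ (i : ℕ)) e')
        (aeval (fun j : Fin f => Yelt p σ₀ j) (monomial e (1 : 𝔽))) ≠ 0 ↔ e = e' := by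
  have := charP_of_card_eq hK σ₀
  have : Finsupp.NonTorsionWeight ℕ fun i : Fin f => p ^ (i : ℕ) :=
    Finsupp.nonTorsionWeight_of ℕ _ fun _ => (Nat.pow_pos (by omega)).ne'
  obtain ⟨n, hn⟩ : ∃ n, e.degree = n := ⟨_, rfl⟩
  induction n generalizing e e' with
  | zero =>
    obtain rfl := (Finsupp.degree_eq_zero_iff e).1 hn
    rw [monomial_zero', C_1, map_one, moment_one, Ne, zero_pow_eq_zero, not_not,
      Finsupp.weight_eq_zero_iff_eq_zero, eq_comm]
  | succ n ih =>
    obtain ⟨j, hj⟩ : ∃ j, e j ≠ 0 := by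
      by_contra! h
      simp [(Finsupp.degree_eq_zero_iff e).2 (Finsupp.ext h)] at hn
    rw [← Finsupp.sub_add_single_one_cancel hj] at hn ⊢
    rw [monomial_add_single, map_mul, pow_one, aeval_X, mul_comm,
      moment_weight_Yelt_mul hp hK σ₀ he']
    by_cases hj' : e' j = 0
    · refine iff_of_false (by simp [hj']) fun h => ?_
      have := congrArg (· j) h
      simp only [Finsupp.coe_add, Finsupp.coe_tsub, Pi.add_apply, Pi.sub_apply,
        Finsupp.single_eq_same] at this
      omega
    · have he'j : (e' j : 𝔽) ≠ 0 := by
        rw [Ne, CharP.cast_eq_zero_iff 𝔽 p]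
        exact fun h => hj' (Nat.eq_zero_of_dvd_of_lt h (he' j))
      have hdeg : (e - Finsupp.single j 1).degree = n := by simpa using hn
      have he'₁ : ∀ i, (e' - Finsupp.single j 1 : Fin f →₀ ℕ) i < p := fun i =>
        (Nat.sub_le _ _).trans_lt (he' i)
      rw [← Finsupp.weight_sub_single_add hj', Nat.add_sub_cancel, mul_ne_zero_iff,
        and_iff_right (neg_ne_zero.2 he'j)]
      refine (ih he'₁ _ hdeg).trans ?_
      conv_rhs => rw [← Finsupp.sub_add_single_one_cancel hj']
      exact (add_left_inj _).symm

theorem linearIndepOn_aeval_monomial [Fact p.Prime] (hp : 2 < p) (hK : Fintype.card K = p ^ f)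
    (σ₀ : K →+* 𝔽) :
    LinearIndepOn 𝔽 (fun e => aeval (fun j : Fin f => Yelt p σ₀ j) (monomial e (1 : 𝔽)))
      (reducedExponents (Fin f) p : Set (Fin f →₀ ℕ)) := by
  have hdiag (e e' : (reducedExponents (Fin f) p : Set (Fin f →₀ ℕ))) :
      moment (σ₀ : K →+ 𝔽) (Finsupp.weight (fun i : Fin f => p ^ (i : ℕ)) e'.1)
        (aeval (fun j : Fin f => Yelt p σ₀ j) (monomial e.1 (1 : 𝔽))) ≠ 0 ↔ e = e' := by
    rw [Subtype.ext_iff]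
    exact moment_aeval_monomial_ne_zero_iff hp hK σ₀
      ((mem_reducedExponents (by omega)).1 (Finset.mem_coe.1 e'.2)) e.1
  refine LinearIndependent.of_pairwise_dual_eq_zero_one _
    (fun e => (moment (σ₀ : K →+ 𝔽) (Finsupp.weight (fun i : Fin f => p ^ (i : ℕ)) e.1)
        (aeval (fun j : Fin f => Yelt p σ₀ j) (monomial e.1 (1 : 𝔽))))⁻¹ •
      moment (σ₀ : K →+ 𝔽) (Finsupp.weight (fun i : Fin f => p ^ (i : ℕ)) e.1))
    (fun e e' hne => ?_) (fun e => ?_)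
  · simp [not_not.1 (mt (hdiag e' e).1 (Ne.symm hne))]
  · simp [inv_mul_cancel₀ ((hdiag e e).2 rfl)]

theorem aeval_Yelt_surjective [Fact p.Prime] (hp : 2 < p) (hK : Fintype.card K = p ^ f)
    (σ₀ : K →+* 𝔽) : Function.Surjective (aeval (R := 𝔽) (fun j : Fin f => Yelt p σ₀ j)) := by
  have hcard : Fintype.card (reducedExponents (Fin f) p : Set (Fin f →₀ ℕ)) =
      Module.finrank 𝔽 (AddMonoidAlgebra 𝔽 K) := by
    simp only [Finset.coe_sort_coe, Fintype.card_coe]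
    rw [card_reducedExponents (by omega), Fintype.card_fin,
      ← hK, Module.finrank_eq_card_basis (AddMonoidAlgebra.basis K 𝔽)]
  have hspan := LinearIndependent.span_eq_top_of_card_eq_finrank'
    (linearIndepOn_aeval_monomial hp hK σ₀) hcard
  have hle : Submodule.span 𝔽 (Set.range fun e : (reducedExponents (Fin f) p : Set (Fin f →₀ ℕ)) =>
      aeval (fun j : Fin f => Yelt p σ₀ j) (monomial e.1 (1 : 𝔽))) ≤
      LinearMap.range (aeval (fun j : Fin f => Yelt p σ₀ j)).toLinearMap := by
    rw [Submodule.span_le]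
    rintro _ ⟨e, rfl⟩
    exact ⟨_, rfl⟩
  intro y
  exact hle (hspan.ge Submodule.mem_top)

end Yelt

theorem statement14_general (p f : ℕ) [Fact p.Prime] (hp : 2 < p)
    (K : Type*) [Field K] [Fintype K] [DecidableEq K] (hK : Fintype.card K = p ^ f)
    (𝔽 : Type*) [Field 𝔽] (σ₀ : K →+* 𝔽) :
    Function.Surjective
      ⇑(MvPolynomial.aeval (R := 𝔽) (fun j : Fin f => Yelt p σ₀ (j : ℕ)) :
        MvPolynomial (Fin f) 𝔽 →ₐ[𝔽] AddMonoidAlgebra 𝔽 K) ∧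
    RingHom.ker
        (MvPolynomial.aeval (R := 𝔽) (fun j : Fin f => Yelt p σ₀ (j : ℕ)) :
          MvPolynomial (Fin f) 𝔽 →ₐ[𝔽] AddMonoidAlgebra 𝔽 K)
      = Ideal.span (Set.range fun j : Fin f => (MvPolynomial.X j : MvPolynomial (Fin f) 𝔽) ^ p) := by
  have hI : Ideal.span (Set.range fun j : Fin f => (X j : MvPolynomial (Fin f) 𝔽) ^ p) ≤
      RingHom.ker (aeval (R := 𝔽) (fun j : Fin f => Yelt p σ₀ j)) := by
    rw [Ideal.span_le]
    rintro _ ⟨j, rfl⟩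
    simp [Yelt_pow_eq_zero hp hK]
  refine ⟨aeval_Yelt_surjective hp hK σ₀, le_antisymm (fun P hP => ?_) hI⟩
  obtain ⟨a, ha, b, hb, rfl⟩ := Submodule.mem_sup.1 (mem_span_X_pow_sup_restrictSupport p P)
  have hb : b = 0 := by
    refine eq_zero_of_linearIndepOn_of_mem_restrictSupport
      (g := (aeval (R := 𝔽) (fun j : Fin f => Yelt p σ₀ j)).toLinearMap)
      (linearIndepOn_aeval_monomial hp hK σ₀) hb ?_
    have ha' := hI ha
    rw [RingHom.mem_ker] at hP ha'
    simpa [ha'] using hP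
  simpa [hb] using ha

/-- Lemma `lem:basic`(i), §3.2.2, identifying `𝔽[N_0/N_0^p]` with
`𝔽[K]`.  The `𝔽`-algebra map `𝔽[T_0,…,T_{f−1}] → 𝔽[K]`, `T_j ↦ Y_j`, is surjective with
kernel `(T_0^p, …, T_{f−1}^p)`. -/
theorem statement14 (p f : ℕ) [Fact p.Prime] (hp : 2 < p) (hf : 1 ≤ f)
    (K : Type*) [Field K] [Fintype K] [DecidableEq K] (hK : Fintype.card K = p ^ f)
    (𝔽 : Type*) [Field 𝔽] (σ₀ : K →+* 𝔽) :
    Function.Surjective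
      ⇑(MvPolynomial.aeval (R := 𝔽) (fun j : Fin f => Yelt p σ₀ (j : ℕ)) :
        MvPolynomial (Fin f) 𝔽 →ₐ[𝔽] AddMonoidAlgebra 𝔽 K) ∧
    RingHom.ker
        (MvPolynomial.aeval (R := 𝔽) (fun j : Fin f => Yelt p σ₀ (j : ℕ)) :
          MvPolynomial (Fin f) 𝔽 →ₐ[𝔽] AddMonoidAlgebra 𝔽 K)
      = Ideal.span (Set.range fun j : Fin f => (MvPolynomial.X j : MvPolynomial (Fin f) 𝔽) ^ p) :=
  statement14_general p f hp K hK 𝔽 σ₀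

end BHHMS
end
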